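/- arXiv:1012.1026 — 7 statements merged into one kernel-verified Lean document; each statement's English description precedes it below -/
import Mathlib

section
/- Let c be 0 or a prime number. Then every non-negative integer belongs to exactly one of the sets S_c and T_c; that is, the set of non-negative integers is the disjoint union of S_c and T_c. -/
/-- The integer nearest to `q/3`, denoted `{q/3}` in the paper. -/
def roundThird (q : ℕ) : ℤ :=
  if q % 3 = 2 then (q / 3 : ℕ) + 1 else (q / 3 : ℕ)

/-- Membership in the set `S₃`: the smallest set of non-negative integers containing `0`
and closed under `a ↦ 3a, 3a+1, 3a+4, 3a+5` for even members `a`. -/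
inductive S3mem : ℕ → Prop where
  | zero : S3mem 0
  | mul3 {a : ℕ} : S3mem a → Even a → S3mem (3 * a)
  | mul3add1 {a : ℕ} : S3mem a → Even a → S3mem (3 * a + 1)
  | mul3add4 {a : ℕ} : S3mem a → Even a → S3mem (3 * a + 4)
  | mul3add5 {a : ℕ} : S3mem a → Even a → S3mem (3 * a + 5)

/-- Membership in the set `S_p` for a prime `p ≥ 5`; here `p / 3` (natural division)
is the largest integer `π_p` strictly smaller than `p/3` (note `3 ∤ p`). -/
inductive Spmem (p : ℕ) : ℕ → Prop where
  | base {a : ℕ} : a ≤ 2 * (p / 3) → Spmem p a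
  | step {θ a : ℕ} : Spmem p θ → Even θ →
      (p : ℤ) * θ - 2 * ((p / 3 : ℕ) : ℤ) - 1 ≤ (a : ℤ) →
      (a : ℤ) ≤ (p : ℤ) * θ + 2 * ((p / 3 : ℕ) : ℤ) →
      Spmem p a

/-- The set `S_c` for `c` zero or a prime. -/
def Sset (c : ℕ) : Set ℕ :=
  if c = 0 then Set.univ
  else if c = 2 then {0}
  else if c = 3 then {a | S3mem a}
  else {a | Spmem c a}

/-- The set `T_c` for `c` zero or a prime. -/
def Tset (c : ℕ) : Set ℕ :=
  if c = 0 then ∅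
  else if c = 2 then {a | 0 < a}
  else {a | ∃ (J : ℤ) (e : ℕ), Odd J ∧ 1 ≤ e ∧
        J * (c : ℤ) ^ e - roundThird (c ^ e) ≤ (a : ℤ) ∧
        (a : ℤ) < J * (c : ℤ) ^ e + roundThird (c ^ e)}

lemma rt_nonneg (q : ℕ) : 0 ≤ roundThird q := by
  unfold roundThird; split <;> positivity
lemma rt_eq_of_mod1 (q : ℕ) (h : q % 3 = 1) : 3 * roundThird q = (q : ℤ) - 1 := by
  unfold roundThird; split <;> omega
lemma rt_eq_of_mod2 (q : ℕ) (h : q % 3 = 2) : 3 * roundThird q = (q : ℤ) + 1 := by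
  unfold roundThird; split <;> omega
lemma rt_even (q : ℕ) (h2 : q % 2 = 1) (h3 : q % 3 ≠ 0) : 2 ∣ roundThird q := by
  unfold roundThird; split <;> omega

section P5
variable {p : ℕ}

lemma pmod3 (hp : p.Prime) (hp5 : 5 ≤ p) : p % 3 = 1 ∨ p % 3 = 2 := by
  have h : ¬ (3 ∣ p) := by
    intro h
    rcases (Nat.Prime.eq_one_or_self_of_dvd hp 3 h) with h' | h' <;> omega
  omega

lemma pmod2 (hp : p.Prime) (hp5 : 5 ≤ p) : p % 2 = 1 := by
  have := hp.two_le
  rcases Nat.Prime.eq_two_or_odd hp with h | h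
  · omega
  · exact h

lemma powmod3 (hp : p.Prime) (hp5 : 5 ≤ p) (e : ℕ) : p ^ e % 3 = 1 ∨ p ^ e % 3 = 2 := by
  have h : ¬ (3 ∣ p ^ e) := by
    intro h
    have := Nat.Prime.dvd_of_dvd_pow Nat.prime_three h
    rcases (Nat.Prime.eq_one_or_self_of_dvd hp 3 this) with h' | h' <;> omega
  omega

lemma powmod2 (hp : p.Prime) (hp5 : 5 ≤ p) (e : ℕ) : p ^ e % 2 = 1 := by
  have h := pmod2 hp hp5
  have : Odd (p ^ e) := (Nat.odd_iff.mpr h).pow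
  exact Nat.odd_iff.mp this

lemma pow3_of_p1 (e : ℕ) (h : p % 3 = 1) : p ^ e % 3 = 1 := by
  simp [Nat.pow_mod, h]

lemma rt1_eq (hp : p.Prime) (hp5 : 5 ≤ p) : roundThird p = (p : ℤ) - 2 * ((p / 3 : ℕ) : ℤ) - 1 := by
  rcases pmod3 hp hp5 with h | h <;> (unfold roundThird; split <;> omega)

lemma rt_succ (hp : p.Prime) (hp5 : 5 ≤ p) (e : ℕ) :
    roundThird (p ^ (e + 1)) = (p : ℤ) * roundThird (p ^ e) + roundThird p ∨
    roundThird (p ^ (e + 1)) = (p : ℤ) * roundThird (p ^ e) - roundThird p := by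
  have hmul : p ^ (e + 1) % 3 = (p ^ e % 3) * (p % 3) % 3 := by
    rw [pow_succ, Nat.mul_mod]
  rcases powmod3 hp hp5 e with hq | hq <;> rcases pmod3 hp hp5 with hp1 | hp1
  · left
    have h1 := rt_eq_of_mod1 (p ^ e) hq
    have h2 := rt_eq_of_mod1 p hp1
    have h3 : p ^ (e + 1) % 3 = 1 := by rw [pow_succ, Nat.mul_mod, hq, hp1]
    have h4 := rt_eq_of_mod1 _ h3
    have key : (3 : ℤ) * roundThird (p ^ (e+1)) = 3 * ((p:ℤ) * roundThird (p^e) + roundThird p) := by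
      push_cast [pow_succ] at h4 h1 h2 ⊢
      linear_combination h4 - (p:ℤ) * h1 - h2
    exact mul_left_cancel₀ (by norm_num : (3:ℤ) ≠ 0) key
  · left
    have h1 := rt_eq_of_mod1 (p ^ e) hq
    have h2 := rt_eq_of_mod2 p hp1
    have h3 : p ^ (e + 1) % 3 = 2 := by rw [pow_succ, Nat.mul_mod, hq, hp1]
    have h4 := rt_eq_of_mod2 _ h3
    have key : (3 : ℤ) * roundThird (p ^ (e+1)) = 3 * ((p:ℤ) * roundThird (p^e) + roundThird p) := by
      push_cast [pow_succ] at h4 h1 h2 ⊢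
      linear_combination h4 - (p:ℤ) * h1 - h2
    exact mul_left_cancel₀ (by norm_num : (3:ℤ) ≠ 0) key
  · right
    have h1 := rt_eq_of_mod2 (p ^ e) hq
    have h2 := rt_eq_of_mod1 p hp1
    have h3 : p ^ (e + 1) % 3 = 2 := by rw [pow_succ, Nat.mul_mod, hq, hp1]
    have h4 := rt_eq_of_mod2 _ h3
    have key : (3 : ℤ) * roundThird (p ^ (e+1)) = 3 * ((p:ℤ) * roundThird (p^e) - roundThird p) := by
      push_cast [pow_succ] at h4 h1 h2 ⊢
      linear_combination h4 - (p:ℤ) * h1 + h2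
    exact mul_left_cancel₀ (by norm_num : (3:ℤ) ≠ 0) key
  · right
    have h1 := rt_eq_of_mod2 (p ^ e) hq
    have h2 := rt_eq_of_mod2 p hp1
    have h3 : p ^ (e + 1) % 3 = 1 := by rw [pow_succ, Nat.mul_mod, hq, hp1]
    have h4 := rt_eq_of_mod1 _ h3
    have key : (3 : ℤ) * roundThird (p ^ (e+1)) = 3 * ((p:ℤ) * roundThird (p^e) - roundThird p) := by
      push_cast [pow_succ] at h4 h1 h2 ⊢
      linear_combination h4 - (p:ℤ) * h1 + h2
    exact mul_left_cancel₀ (by norm_num : (3:ℤ) ≠ 0) key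

end P5

section Core
variable {p : ℕ}

/-- Common facts bundle -/
lemma basic_facts (hp : p.Prime) (hp5 : 5 ≤ p) (e : ℕ) :
    Odd (((p ^ e : ℕ) : ℤ)) ∧ Even (roundThird (p ^ e)) ∧
    ((p:ℤ)^e = ((p ^ e : ℕ) : ℤ)) := by
  refine ⟨?_, ?_, by push_cast; ring⟩
  · rw [Int.odd_coe_nat]
    exact Nat.odd_iff.mpr (powmod2 hp hp5 e)
  · obtain ⟨k, hk⟩ := rt_even (p ^ e) (powmod2 hp hp5 e) (by rcases powmod3 hp hp5 e with h | h <;> omega)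
    exact ⟨k, by omega⟩

lemma down (hp : p.Prime) (hp5 : 5 ≤ p) {J θ n : ℤ} {e : ℕ}
    (hJ : Odd J) (hθ : Even θ)
    (ht1 : (p:ℤ) * θ - 2 * ((p / 3 : ℕ) : ℤ) - 1 ≤ n)
    (ht2 : n ≤ (p:ℤ) * θ + 2 * ((p / 3 : ℕ) : ℤ))
    (hT1 : J * (p:ℤ) ^ (e+1) - roundThird (p ^ (e+1)) ≤ n)
    (hT2 : n < J * (p:ℤ) ^ (e+1) + roundThird (p ^ (e+1))) :
    J * (p:ℤ) ^ e - roundThird (p ^ e) ≤ θ ∧ θ < J * (p:ℤ) ^ e + roundThird (p ^ e) := by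
  set P : ℤ := (p : ℤ) with hPdef
  set Pi : ℤ := ((p / 3 : ℕ) : ℤ) with hPidef
  set Q : ℤ := (p:ℤ) ^ e with hQdef
  set R : ℤ := roundThird (p ^ e) with hRdef
  set R' : ℤ := roundThird (p ^ (e+1)) with hR'def
  set R1 : ℤ := roundThird p with hR1def
  obtain ⟨hQodd, hReven, -⟩ := basic_facts hp hp5 e
  have hQodd' : Odd Q := by rw [hQdef]; push_cast at hQodd ⊢; exact_mod_cast hQodd
  have hR1eq : R1 = P - 2 * Pi - 1 := rt1_eq hp hp5
  have hP5 : (5:ℤ) ≤ P := by rw [hPdef]; exact_mod_cast hp5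
  have hPi1 : 1 ≤ Pi := by
    have : 1 ≤ p / 3 := by omega
    rw [hPidef]; exact_mod_cast this
  have hPpos : (0:ℤ) < P := by linarith
  have hRnn : 0 ≤ R := rt_nonneg _
  have hR1nn : 0 ≤ R1 := rt_nonneg _
  have hR1ub : R1 + 2 * Pi + 1 ≤ P := by linarith
  have hpows : (p:ℤ) ^ (e+1) = P * Q := by rw [hQdef, pow_succ]; ring
  rw [hpows] at hT1 hT2
  have hJQodd : Odd (J * Q) := hJ.mul hQodd'
  constructor
  · -- lower bound
    have k2 : P * (J * Q - R - 1) < P * θ := by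
      rcases rt_succ hp hp5 e with h | h <;> nlinarith [hT1, ht2]
    have := lt_of_mul_lt_mul_left k2 (le_of_lt hPpos)
    linarith [Int.add_one_le_iff.mpr this]
  · -- upper bound
    have k1 : P * θ < P * (J * Q + R + 1) := by
      rcases rt_succ hp hp5 e with h | h <;> nlinarith [hT2, ht1]
    have h1 := lt_of_mul_lt_mul_left k1 (le_of_lt hPpos)
    have hne : θ ≠ J * Q + R := by
      intro heq
      have : Odd (J * Q + R) := hJQodd.add_even hReven
      rw [← heq] at this
      exact (Int.not_odd_iff_even.mpr hθ) this
    have : θ ≤ J * Q + R := by linarith [Int.lt_add_one_iff.mp h1]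
    omega
end Core

section Core2
variable {p : ℕ}

lemma up (hp : p.Prime) (hp5 : 5 ≤ p) {J θ n : ℤ} {e : ℕ}
    (hJ : Odd J) (hθ : Even θ)
    (ht1 : (p:ℤ) * θ - 2 * ((p / 3 : ℕ) : ℤ) - 1 ≤ n)
    (ht2 : n ≤ (p:ℤ) * θ + 2 * ((p / 3 : ℕ) : ℤ))
    (hT1 : J * (p:ℤ) ^ e - roundThird (p ^ e) ≤ θ)
    (hT2 : θ < J * (p:ℤ) ^ e + roundThird (p ^ e)) :
    J * (p:ℤ) ^ (e+1) - roundThird (p ^ (e+1)) ≤ n ∧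
      n < J * (p:ℤ) ^ (e+1) + roundThird (p ^ (e+1)) := by
  set P : ℤ := (p : ℤ) with hPdef
  set Pi : ℤ := ((p / 3 : ℕ) : ℤ) with hPidef
  set Q : ℤ := (p:ℤ) ^ e with hQdef
  set R : ℤ := roundThird (p ^ e) with hRdef
  set R' : ℤ := roundThird (p ^ (e+1)) with hR'def
  set R1 : ℤ := roundThird p with hR1def
  obtain ⟨hQodd, hReven, -⟩ := basic_facts hp hp5 e
  have hQodd' : Odd Q := by rw [hQdef]; push_cast at hQodd ⊢; exact_mod_cast hQodd
  have hR1eq : R1 = P - 2 * Pi - 1 := rt1_eq hp hp5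
  have hP5 : (5:ℤ) ≤ P := by rw [hPdef]; exact_mod_cast hp5
  have hPi1 : 1 ≤ Pi := by
    have : 1 ≤ p / 3 := by omega
    rw [hPidef]; exact_mod_cast this
  have hPpos : (0:ℤ) < P := by linarith
  have hRnn : 0 ≤ R := rt_nonneg _
  have hR1nn : 0 ≤ R1 := rt_nonneg _
  have hpows : (p:ℤ) ^ (e+1) = P * Q := by rw [hQdef, pow_succ]; ring
  rw [hpows]
  have hJQodd : Odd (J * Q) := hJ.mul hQodd'
  -- parity refinement for the lower endpoint
  have hlow : J * Q - R + 1 ≤ θ := by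
    have hne : θ ≠ J * Q - R := by
      intro heq
      have : Odd (J * Q - R) := hJQodd.sub_even hReven
      rw [← heq] at this
      exact (Int.not_odd_iff_even.mpr hθ) this
    omega
  have hup : θ ≤ J * Q + R - 1 := by omega
  have m1 : P * (J * Q - R + 1) ≤ P * θ := mul_le_mul_of_nonneg_left hlow (le_of_lt hPpos)
  have m2 : P * θ ≤ P * (J * Q + R - 1) := mul_le_mul_of_nonneg_left hup (le_of_lt hPpos)
  rcases rt_succ hp hp5 e with h | h <;> constructor <;> nlinarith [m1, m2, ht1, ht2]

lemma T_lb (hp : p.Prime) (hp5 : 5 ≤ p) {J n : ℤ} {e : ℕ}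
    (hJ : Odd J) (he : 1 ≤ e) (hn : 0 ≤ n)
    (h1 : J * (p:ℤ) ^ e - roundThird (p ^ e) ≤ n)
    (h2 : n < J * (p:ℤ) ^ e + roundThird (p ^ e)) :
    2 * ((p / 3 : ℕ) : ℤ) + 1 ≤ n := by
  have hp3 : p % 3 = 1 ∨ p % 3 = 2 := pmod3 hp hp5
  have hPub1 : ((p:ℤ)) ≤ 3 * ((p / 3 : ℕ) : ℤ) + 2 := by omega
  have hPub2 : 3 * ((p / 3 : ℕ) : ℤ) + 1 ≤ (p:ℤ) := by omega
  set P : ℤ := (p : ℤ) with hPdef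
  set Pi : ℤ := ((p / 3 : ℕ) : ℤ) with hPidef
  set Q : ℤ := (p:ℤ) ^ e with hQdef
  set R : ℤ := roundThird (p ^ e) with hRdef
  have hP5 : (5:ℤ) ≤ P := by rw [hPdef]; exact_mod_cast hp5
  have hPpos : (0:ℤ) < P := by linarith
  have hQP : P ≤ Q := by
    rw [hQdef, hPdef]
    calc (p:ℤ) = (p:ℤ) ^ 1 := (pow_one _).symm
    _ ≤ (p:ℤ) ^ e := pow_le_pow_right₀ (by linarith) he
  have hPi1 : 1 ≤ Pi := by
    have : 1 ≤ p / 3 := by omega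
    rw [hPidef]; exact_mod_cast this
  -- the key fact about R
  have hRQ : 3 * R = Q - 1 ∨ (3 * R = Q + 1 ∧ P = 3 * Pi + 2) := by
    rcases powmod3 hp hp5 e with hq | hq
    · left
      have := rt_eq_of_mod1 (p ^ e) hq
      rw [hRdef, hQdef]; push_cast at this ⊢; linarith
    · right
      constructor
      · have := rt_eq_of_mod2 (p ^ e) hq
        rw [hRdef, hQdef]; push_cast at this ⊢; linarith
      · rcases pmod3 hp hp5 with hp1 | hp1
        · exact absurd (pow3_of_p1 e hp1) (by omega)
        · rw [hPdef, hPidef]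
          have : p = 3 * (p/3) + 2 := by omega
          exact_mod_cast this
  have hRnn : 0 ≤ R := rt_nonneg _
  have hRltQ : R < Q := by rcases hRQ with h | ⟨h, -⟩ <;> linarith
  -- J ≥ 1
  have hJ1 : 1 ≤ J := by
    have hJQ : -1 * Q < J * Q := by nlinarith
    have : (-1 : ℤ) < J := lt_of_mul_lt_mul_right hJQ (by linarith)
    rcases hJ with ⟨k, rfl⟩
    omega
  have hQJQ : Q ≤ J * Q := le_mul_of_one_le_left (by linarith) hJ1
  rcases hRQ with h | ⟨h, hPeq⟩ <;> linarith
end Core2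

section Main5
variable {p : ℕ}

lemma Sp_not_T (hp : p.Prime) (hp5 : 5 ≤ p) {n : ℕ} (h : Spmem p n) :
    ∀ (J : ℤ) (e : ℕ), Odd J → 1 ≤ e →
      J * (p:ℤ) ^ e - roundThird (p ^ e) ≤ (n : ℤ) →
      (n : ℤ) < J * (p:ℤ) ^ e + roundThird (p ^ e) → False := by
  induction h with
  | base hb =>
    intro J e hJ he h1 h2
    have := T_lb hp hp5 hJ he (by positivity) h1 h2
    omega
  | step hθS hθeven ht1 ht2 IH =>
    intro J e hJ he h1 h2
    rename_i θ a
    cases e with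
    | zero => omega
    | succ f =>
      have hθz : Even ((θ : ℕ) : ℤ) := Int.even_coe_nat θ |>.mpr hθeven
      have hd := down hp hp5 hJ hθz ht1 ht2 h1 h2
      cases f with
      | zero =>
        have hrt1 : roundThird (p ^ 0) = 0 := by norm_num [roundThird]
        rw [hrt1] at hd
        simp only [pow_zero, mul_one] at hd
        omega
      | succ g => exact IH J (g+1) hJ (by omega) hd.1 hd.2

lemma Sp_cover (hp : p.Prime) (hp5 : 5 ≤ p) : ∀ n : ℕ, Spmem p n ∨
    ∃ (J : ℤ) (e : ℕ), Odd J ∧ 1 ≤ e ∧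
      J * (p:ℤ) ^ e - roundThird (p ^ e) ≤ (n : ℤ) ∧
      (n : ℤ) < J * (p:ℤ) ^ e + roundThird (p ^ e) := by
  intro n
  induction n using Nat.strong_induction_on with
  | _ n IH =>
  by_cases hb : n ≤ 2 * (p / 3)
  · exact Or.inl (.base hb)
  push_neg at hb
  have hp3 : p % 3 = 1 ∨ p % 3 = 2 := pmod3 hp hp5
  set c : ℕ := 2 * (p / 3) with hc
  set m0 : ℕ := (n + c + 1) / p with hm0
  have hdm := Nat.div_add_mod (n + c + 1) p
  have hmodlt : (n + c + 1) % p < p := Nat.mod_lt _ (by omega)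
  set rr : ℕ := (n + c + 1) % p with hrr
  rw [← hm0] at hdm
  -- basic ℕ facts
  have h5m : 5 * m0 ≤ p * m0 := Nat.mul_le_mul_right m0 hp5
  have hA : 5 * m0 ≤ n + c + 1 := le_trans h5m (Nat.le.intro hdm)
  have hm0n : m0 < n := by omega
  have hm0pos : 1 ≤ m0 := by
    rcases Nat.eq_zero_or_pos m0 with h0 | h0
    · exfalso
      rw [h0] at hdm
      simp only [Nat.mul_zero, Nat.zero_add] at hdm
      omega
    · exact h0
  -- ℤ versions
  rw [hc] at hdm
  have hz : (p:ℤ) * (m0:ℤ) + (rr:ℤ) = (n:ℤ) + 2 * ((p/3:ℕ):ℤ) + 1 := by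
    exact_mod_cast congrArg (fun x : ℕ => (x : ℤ)) hdm
  have hrrz : (0:ℤ) ≤ (rr:ℤ) ∧ (rr:ℤ) < (p:ℤ) := by
    constructor
    · positivity
    · exact_mod_cast hmodlt
  have hp42 : (p:ℤ) ≤ 4 * ((p/3:ℕ):ℤ) + 2 := by omega
  rcases Nat.even_or_odd m0 with hm0e | hm0o
  · -- m0 even : n is in the tile of m0
    have t1 : (p:ℤ) * (m0:ℤ) - 2 * ((p/3:ℕ):ℤ) - 1 ≤ (n:ℤ) := by linarith [hrrz.1]
    have t2 : (n:ℤ) ≤ (p:ℤ) * (m0:ℤ) + 2 * ((p/3:ℕ):ℤ) := by linarith [hrrz.2]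
    rcases IH m0 hm0n with hS | ⟨J, e, hJ, he, u1, u2⟩
    · exact Or.inl (.step hS hm0e t1 t2)
    · have hm0z : Even ((m0:ℕ):ℤ) := Int.even_coe_nat m0 |>.mpr hm0e
      obtain ⟨w1, w2⟩ := up hp hp5 hJ hm0z t1 t2 u1 u2
      exact Or.inr ⟨J, e+1, hJ, by omega, w1, w2⟩
  · -- m0 odd
    have hr1 : roundThird p = (p:ℤ) - 2 * ((p/3:ℕ):ℤ) - 1 := rt1_eq hp hp5
    by_cases hcase : (p:ℤ) * (m0:ℤ) - roundThird p ≤ (n:ℤ)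
    · -- n belongs to the T-interval around p * m0, level 1
      refine Or.inr ⟨(m0:ℤ), 1, ?_, le_refl 1, ?_, ?_⟩
      · exact Int.odd_coe_nat m0 |>.mpr hm0o
      · rw [pow_one, pow_one]; linarith [hcase]
      · rw [pow_one, pow_one]
        have : (n:ℤ) ≤ (p:ℤ) * (m0:ℤ) + 2*((p/3:ℕ):ℤ) - (2*((p/3:ℕ):ℤ) + 1) + (p:ℤ) - 1 - 1 + 1 := by
          linarith [hrrz.2]
        linarith [hr1, this]
    · -- n belongs to the tile of m0 - 1
      push_neg at hcase
      set m' : ℕ := m0 - 1 with hm'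
      have hm'z : ((m':ℕ):ℤ) = (m0:ℤ) - 1 := by
        have : (1:ℕ) ≤ m0 := hm0pos
        push_cast [hm']
        omega
      have t2 : (n:ℤ) ≤ (p:ℤ) * (m':ℤ) + 2 * ((p/3:ℕ):ℤ) := by
        rw [hm'z]; linarith [hcase, hr1]
      have t1 : (p:ℤ) * (m':ℤ) - 2 * ((p/3:ℕ):ℤ) - 1 ≤ (n:ℤ) := by
        rw [hm'z]
        have hppos : (0:ℤ) < (p:ℤ) := by positivity
        nlinarith [hrrz.1]
      have hm'pos : 1 ≤ m' := by
        rcases Nat.eq_zero_or_pos m' with h0 | h0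
        · exfalso
          have hz0 : ((m':ℕ):ℤ) = 0 := by rw [h0]; simp
          rw [hz0] at t2
          have : (n:ℤ) ≤ 2 * ((p/3:ℕ):ℤ) := by linarith
          omega
        · exact h0
      have hm'e : Even m' := by
        have := Nat.odd_iff.mp hm0o
        refine Nat.even_iff.mpr ?_
        omega
      have hm'n : m' < n := by omega
      rcases IH m' hm'n with hS | ⟨J, e, hJ, he, u1, u2⟩
      · exact Or.inl (.step hS hm'e t1 t2)
      · have hm'zz : Even ((m':ℕ):ℤ) := Int.even_coe_nat m' |>.mpr hm'e
        obtain ⟨w1, w2⟩ := up hp hp5 hJ hm'zz t1 t2 u1 u2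
        exact Or.inr ⟨J, e+1, hJ, by omega, w1, w2⟩
end Main5


lemma rt3 (e : ℕ) : roundThird (3 ^ (e + 1)) = (3 : ℤ) ^ e := by
  have h3 : 3 ^ (e + 1) % 3 = 0 := by rw [pow_succ]; exact Nat.mul_mod_left _ 3
  have h4 : 3 ^ (e + 1) / 3 = 3 ^ e := by rw [pow_succ]; exact Nat.mul_div_cancel _ (by norm_num)
  unfold roundThird
  rw [if_neg (by omega), h4]
  push_cast; ring

lemma pow3_odd (f : ℕ) : Odd ((3:ℤ) ^ f) := Odd.pow (by decide)

lemma pow3_pos (f : ℕ) : (0:ℤ) < 3 ^ f := by positivity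

lemma down3 {J a r : ℤ} {f : ℕ} (hJ : Odd J) (ha : Even a) (hr0 : 0 ≤ r) (hr5 : r ≤ 5)
    (h1 : J * (3:ℤ) ^ (f+2) - (3:ℤ) ^ (f+1) ≤ 3 * a + r)
    (h2 : 3 * a + r < J * (3:ℤ) ^ (f+2) + (3:ℤ) ^ (f+1)) :
    J * (3:ℤ) ^ (f+1) - (3:ℤ) ^ f ≤ a ∧ a < J * (3:ℤ) ^ (f+1) + (3:ℤ) ^ f := by
  set Q : ℤ := (3:ℤ) ^ f with hQ
  have hQpos : 0 < Q := pow3_pos f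
  have hQodd : Odd Q := pow3_odd f
  have e1 : (3:ℤ) ^ (f+1) = 3 * Q := by rw [hQ, pow_succ]; ring
  have e2 : (3:ℤ) ^ (f+2) = 9 * Q := by rw [hQ, pow_succ, pow_succ]; ring
  rw [e1, e2] at h1 h2
  rw [e1]
  have hodd : Odd (3 * Q * J - Q - 1 + 1 + 1) := by
    have h3QJ : Odd (3 * Q * J) := ((by decide : Odd (3:ℤ)).mul hQodd).mul hJ
    obtain ⟨u, hu⟩ := h3QJ
    obtain ⟨v, hv⟩ := hQodd
    exact ⟨u - v, by omega⟩
  constructor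
  · -- lower bound
    have k : 3 * (J * (3 * Q) - Q - 2) < 3 * a := by linarith
    have ha2 : J * (3 * Q) - Q - 2 < a := lt_of_mul_lt_mul_left k (by norm_num)
    have hne : a ≠ J * (3 * Q) - Q - 1 := by
      intro heq
      have : Odd a := by
        rw [heq]
        obtain ⟨u, hu⟩ := hodd
        exact ⟨u - 1, by linarith [hu]⟩
      exact (Int.not_odd_iff_even.mpr ha) this
    omega
  · have k : 3 * a < 3 * (J * (3 * Q) + Q) := by linarith
    exact lt_of_mul_lt_mul_left k (by norm_num)

lemma up3 {J a n : ℤ} {f : ℕ} (hJ : Odd J) (ha : Even a)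
    (hn1 : 3 * a ≤ n) (hn2 : n ≤ 3 * a + 5)
    (h1 : J * (3:ℤ) ^ (f+1) - (3:ℤ) ^ f ≤ a)
    (h2 : a < J * (3:ℤ) ^ (f+1) + (3:ℤ) ^ f) :
    J * (3:ℤ) ^ (f+2) - (3:ℤ) ^ (f+1) ≤ n ∧ n < J * (3:ℤ) ^ (f+2) + (3:ℤ) ^ (f+1) := by
  set Q : ℤ := (3:ℤ) ^ f with hQ
  have hQpos : 0 < Q := pow3_pos f
  have hQodd : Odd Q := pow3_odd f
  have e1 : (3:ℤ) ^ (f+1) = 3 * Q := by rw [hQ, pow_succ]; ring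
  have e2 : (3:ℤ) ^ (f+2) = 9 * Q := by rw [hQ, pow_succ, pow_succ]; ring
  rw [e1] at h1 h2
  rw [e1, e2]
  have h3QJ : Odd (J * (3 * Q)) := hJ.mul ((by decide : Odd (3:ℤ)).mul hQodd)
  -- upper endpoint is odd, so a ≤ J*3Q + Q - 2
  have hup : a ≤ J * (3 * Q) + Q - 2 := by
    have hne : a ≠ J * (3 * Q) + Q - 1 := by
      intro heq
      have : Odd a := by
        obtain ⟨u, hu⟩ := h3QJ
        obtain ⟨v, hv⟩ := hQodd
        rw [heq, hu, hv]
        exact ⟨u + v, by ring⟩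
      exact (Int.not_odd_iff_even.mpr ha) this
    omega
  constructor
  · linarith
  · linarith

lemma rt3_1 : roundThird 3 = 1 := by norm_num [roundThird]

lemma step3_notT {a : ℕ} (ha : Even a)
    (IH : ∀ (J : ℤ) (e : ℕ), Odd J → 1 ≤ e →
      J * (3:ℤ) ^ e - roundThird (3 ^ e) ≤ (a : ℤ) →
      (a : ℤ) < J * (3:ℤ) ^ e + roundThird (3 ^ e) → False)
    {r : ℕ} (hr : r = 0 ∨ r = 1 ∨ r = 4 ∨ r = 5) :
    ∀ (J : ℤ) (e : ℕ), Odd J → 1 ≤ e →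
      J * (3:ℤ) ^ e - roundThird (3 ^ e) ≤ ((3 * a + r : ℕ) : ℤ) →
      ((3 * a + r : ℕ) : ℤ) < J * (3:ℤ) ^ e + roundThird (3 ^ e) → False := by
  intro J e hJ he h1 h2
  have hcast : ((3 * a + r : ℕ) : ℤ) = 3 * (a:ℤ) + (r:ℤ) := by push_cast; ring
  rw [hcast] at h1 h2
  cases e with
  | zero => omega
  | succ f =>
    cases f with
    | zero =>
      simp only [pow_one, show (3:ℕ)^(0+1) = 3 from by norm_num, rt3_1] at h1 h2
      have hJ' : J % 2 = 1 := Int.odd_iff.mp hJ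
      have ha' : a % 2 = 0 := Nat.even_iff.mp ha
      omega
    | succ g =>
      rw [rt3 (g+1)] at h1 h2
      have hd := down3 (r := (r:ℤ)) (f := g) hJ (Int.even_coe_nat a |>.mpr ha)
        (by positivity) (by exact_mod_cast (show r ≤ (5:ℕ) by omega)) h1 h2
      exact IH J (g+1) hJ (by omega) (by rw [rt3 g]; exact hd.1) (by rw [rt3 g]; exact hd.2)

lemma S3_not_T {n : ℕ} (h : S3mem n) :
    ∀ (J : ℤ) (e : ℕ), Odd J → 1 ≤ e →
      J * (3:ℤ) ^ e - roundThird (3 ^ e) ≤ (n : ℤ) →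
      (n : ℤ) < J * (3:ℤ) ^ e + roundThird (3 ^ e) → False := by
  induction h with
  | zero =>
    intro J e hJ he h1 h2
    cases e with
    | zero => omega
    | succ f =>
      rw [rt3 f] at h1 h2
      set Q : ℤ := (3:ℤ) ^ f with hQ
      have hQpos : 0 < Q := pow3_pos f
      have e1 : (3:ℤ) ^ (f+1) = 3 * Q := by rw [hQ, pow_succ]; ring
      rw [e1] at h1 h2
      simp only [Nat.cast_zero] at h1 h2
      -- 0 < J * 3Q + Q and J*3Q - Q ≤ 0
      have hJ1 : 1 ≤ J := by
        have hJQ : -1 * (3 * Q) < J * (3 * Q) := by linarith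
        have : (-1 : ℤ) < J := lt_of_mul_lt_mul_right hJQ (by linarith)
        rcases hJ with ⟨k, rfl⟩
        omega
      have : (3 * Q) ≤ J * (3 * Q) := le_mul_of_one_le_left (by linarith) hJ1
      linarith
  | mul3 hS hev IH =>
    intro J e hJ he h1 h2
    exact step3_notT hev IH (Or.inl rfl) J e hJ he h1 h2
  | mul3add1 hS hev IH =>
    intro J e hJ he h1 h2
    exact step3_notT hev IH (by omega : (1:ℕ) = 0 ∨ (1:ℕ) = 1 ∨ (1:ℕ) = 4 ∨ (1:ℕ) = 5) J e hJ he h1 h2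
  | mul3add4 hS hev IH =>
    intro J e hJ he h1 h2
    exact step3_notT hev IH (by omega : (4:ℕ) = 0 ∨ (4:ℕ) = 1 ∨ (4:ℕ) = 4 ∨ (4:ℕ) = 5) J e hJ he h1 h2
  | mul3add5 hS hev IH =>
    intro J e hJ he h1 h2
    exact step3_notT hev IH (by omega : (5:ℕ) = 0 ∨ (5:ℕ) = 1 ∨ (5:ℕ) = 4 ∨ (5:ℕ) = 5) J e hJ he h1 h2

lemma cover3 : ∀ n : ℕ, S3mem n ∨
    ∃ (J : ℤ) (e : ℕ), Odd J ∧ 1 ≤ e ∧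
      J * (3:ℤ) ^ e - roundThird (3 ^ e) ≤ (n : ℤ) ∧
      (n : ℤ) < J * (3:ℤ) ^ e + roundThird (3 ^ e) := by
  intro n
  induction n using Nat.strong_induction_on with
  | _ n IH =>
  set k : ℕ := n / 6 with hk
  set r : ℕ := n % 6 with hr
  have hn6 : n = 6 * k + r ∧ r < 6 := by
    constructor
    · rw [hk, hr]; omega
    · rw [hr]; omega
  by_cases hT1 : r = 2 ∨ r = 3
  · -- T with e = 1
    right
    refine ⟨2 * (k:ℤ) + 1, 1, ⟨(k:ℤ), by ring⟩, le_refl 1, ?_, ?_⟩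
    · simp only [pow_one, show (3:ℕ)^1 = 3 from by norm_num, rt3_1]
      have : (n:ℤ) = 6 * (k:ℤ) + (r:ℤ) := by exact_mod_cast hn6.1
      rcases hT1 with h | h <;> (rw [this]; push_cast [h]; ring_nf; linarith)
    · simp only [pow_one, show (3:ℕ)^1 = 3 from by norm_num, rt3_1]
      have : (n:ℤ) = 6 * (k:ℤ) + (r:ℤ) := by exact_mod_cast hn6.1
      rcases hT1 with h | h <;> (rw [this]; push_cast [h]; ring_nf; linarith)
  · push_neg at hT1
    have hrset : r = 0 ∨ r = 1 ∨ r = 4 ∨ r = 5 := by omega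
    rcases Nat.eq_zero_or_pos k with hk0 | hkpos
    · -- small cases : n ∈ {0,1,4,5}
      left
      have hn : n = r := by omega
      have h0 : S3mem 0 := S3mem.zero
      rcases hrset with h | h | h | h
      · rw [hn, h]; exact S3mem.zero
      · rw [hn, h]; exact (by norm_num : 3*0+1 = 1) ▸ S3mem.mul3add1 h0 Even.zero
      · rw [hn, h]; exact (by norm_num : 3*0+4 = 4) ▸ S3mem.mul3add4 h0 Even.zero
      · rw [hn, h]; exact (by norm_num : 3*0+5 = 5) ▸ S3mem.mul3add5 h0 Even.zero
    · set a : ℕ := 2 * k with ha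
      have haev : Even a := ⟨k, by omega⟩
      have han : a < n := by omega
      have hna : n = 3 * a + r := by omega
      rcases IH a han with hS | ⟨J, e, hJ, he, u1, u2⟩
      · left
        rw [hna]
        rcases hrset with h | h | h | h
        · rw [h]; exact (by norm_num : 3*a+0 = 3*a) ▸ S3mem.mul3 hS haev
        · rw [h]; exact S3mem.mul3add1 hS haev
        · rw [h]; exact S3mem.mul3add4 hS haev
        · rw [h]; exact S3mem.mul3add5 hS haev
      · right
        cases e with
        | zero => omega
        | succ f =>
          rw [rt3 f] at u1 u2
          have w1 : 3 * (a:ℤ) ≤ (n:ℤ) := by exact_mod_cast (show 3*a ≤ n by omega)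
          have w2 : (n:ℤ) ≤ 3 * (a:ℤ) + 5 := by exact_mod_cast (show n ≤ 3*a+5 by omega)
          have hd := up3 (n := (n:ℤ)) hJ (Int.even_coe_nat a |>.mpr haev) w1 w2 u1 u2
          exact ⟨J, f+2, hJ, by omega, by rw [rt3 (f+1)]; exact hd.1, by rw [rt3 (f+1)]; exact hd.2⟩


/-- Theorem (H72+): for `c` zero or a prime, the set of non-negative integers is the
disjoint union of `S_c` and `T_c`. -/
theorem S_union_T_partition (c : ℕ) (hc : c = 0 ∨ c.Prime) :
    Sset c ∪ Tset c = Set.univ ∧ Sset c ∩ Tset c = ∅ := by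
  rcases hc with rfl | hp
  · constructor
    · simp [Sset, Tset]
    · simp [Sset, Tset]
  · by_cases h2 : c = 2
    · subst h2
      constructor
      · rw [Set.eq_univ_iff_forall]
        intro x
        simp only [Sset, Tset]
        norm_num
        omega
      · rw [Set.eq_empty_iff_forall_notMem]
        intro x hx
        simp only [Sset, Tset] at hx
        norm_num at hx
    · by_cases h3 : c = 3
      · subst h3
        have hS : Sset 3 = {a | S3mem a} := by
          simp [Sset]
        have hT : Tset 3 = {a : ℕ | ∃ (J : ℤ) (e : ℕ), Odd J ∧ 1 ≤ e ∧
            J * (3:ℤ) ^ e - roundThird (3 ^ e) ≤ (a : ℤ) ∧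
            (a : ℤ) < J * (3:ℤ) ^ e + roundThird (3 ^ e)} := by
          simp only [Tset, if_neg (by norm_num : (3:ℕ) ≠ 0), if_neg (by norm_num : (3:ℕ) ≠ 2)]
          norm_num
        constructor
        · rw [Set.eq_univ_iff_forall]
          intro x
          rcases cover3 x with h | h
          · left; rw [hS]; exact h
          · right; rw [hT]; exact h
        · rw [Set.eq_empty_iff_forall_notMem]
          intro x hx
          obtain ⟨hxS, hxT⟩ := hx
          rw [hS] at hxS
          rw [hT] at hxT
          obtain ⟨J, e, hJ, he, b1, b2⟩ := hxT
          exact S3_not_T hxS J e hJ he b1 b2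
      · have h0 : c ≠ 0 := hp.pos.ne'
        have h5 : 5 ≤ c := by
          have h2le := hp.two_le
          have h4 : c ≠ 4 := by rintro rfl; norm_num at hp
          omega
        have hS : Sset c = {a | Spmem c a} := by
          simp only [Sset, if_neg h0, if_neg h2, if_neg h3]
        have hT : Tset c = {a : ℕ | ∃ (J : ℤ) (e : ℕ), Odd J ∧ 1 ≤ e ∧
            J * (c:ℤ) ^ e - roundThird (c ^ e) ≤ (a : ℤ) ∧
            (a : ℤ) < J * (c:ℤ) ^ e + roundThird (c ^ e)} := by
          simp only [Tset, if_neg h0, if_neg h2]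
        constructor
        · rw [Set.eq_univ_iff_forall]
          intro x
          rcases Sp_cover hp h5 x with h | h
          · left; rw [hS]; exact h
          · right; rw [hT]; exact h
        · rw [Set.eq_empty_iff_forall_notMem]
          intro x hx
          obtain ⟨hxS, hxT⟩ := hx
          rw [hS] at hxS
          rw [hT] at hxT
          obtain ⟨J, e, hJ, he, b1, b2⟩ := hxT
          exact Sp_not_T hp h5 hxS J e hJ he b1 b2
end

section
/- Let p ≥ 5 be a prime and let d ∈ D_p. Then: (a) v_p(C(2d,d)) = v_p(C(3d,d)); and for every integer a with 0 ≤ a ≤ 2d: (b) p^{v_p(C(2d,d))} divides C(a,d)·C(3d−a,d); (c) p^{v_p(C(2d,d))} divides C(a,d)·C(3d−1−a,d); (d) p^{v_p(C(2d,d))} divides C(a,d−1)·C(3d−2−a,d). -/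
/-- Membership in the set `D_p` for a prime `p ≥ 5`; here `p / 3` (natural division)
is the largest integer `π_p` strictly smaller than `p/3` (note `3 ∤ p`). -/
inductive Dpmem (p : ℕ) : ℕ → Prop where
  | base {a : ℕ} : a ≤ p / 3 → Dpmem p a
  | step {d a : ℕ} : Dpmem p d →
      (p : ℤ) * d - ((p / 3 : ℕ) : ℤ) ≤ (a : ℤ) →
      (a : ℤ) ≤ (p : ℤ) * d + ((p / 3 : ℕ) : ℤ) →
      Dpmem p a

/- ### Auxiliary lemmas -/

/-- If `N ≡ x [MOD P]` and `x < P` then `N % P = x`. -/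
lemma mod_eq_of_modEq' {N P x : ℕ} (h : N ≡ x [MOD P]) (hx : x < P) : N % P = x := by
  have h' : N % P = x % P := h
  rw [h', Nat.mod_eq_of_lt hx]

lemma modEq_sub' {x P : ℕ} (h : P ≤ x) : x ≡ x - P [MOD P] := by
  have h1 : (x - P) + P ≡ x - P [MOD P] := by
    show ((x - P) + P) % P = (x - P) % P
    rw [Nat.add_mod_right]
  rwa [Nat.sub_add_cancel h] at h1

/-- Carry criterion: for `d ≤ a`, there is a carry at level `P` when adding `d` and `a - d`
iff `a % P < d % P`. -/
lemma carry_iff' {P a d : ℕ} (hP : 0 < P) (h : d ≤ a) :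
    P ≤ d % P + (a - d) % P ↔ a % P < d % P := by
  obtain ⟨m, rfl⟩ : ∃ m, a = d + m := ⟨a - d, by omega⟩
  have h1 : (d + m) % P = (d % P + m % P) % P := Nat.add_mod d m P
  have hx : d % P < P := Nat.mod_lt _ hP
  have hy : m % P < P := Nat.mod_lt _ hP
  have h2 : d + m - d = m := by omega
  rw [h2]
  rcases lt_or_ge (d % P + m % P) P with hlt | hge
  · rw [Nat.mod_eq_of_lt hlt] at h1; omega
  · have h3 : (d % P + m % P) % P = d % P + m % P - P := by
      rw [Nat.mod_eq_sub_mod hge, Nat.mod_eq_of_lt (by omega)]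
    rw [h3] at h1; omega

/-- Structural lemma about `D_p`, integer version: `d mod p^i` lies within
`(p^i - 1)/3` of `0` or of `p^i`. -/
lemma Dp_int {p : ℕ} (hp : p.Prime) (hp5 : 5 ≤ p) {d : ℕ} (hd : Dpmem p d) :
    ∀ i : ℕ, 3 * ((d : ℤ) % (p : ℤ) ^ i) + 1 ≤ (p : ℤ) ^ i ∨
      3 * ((p : ℤ) ^ i - (d : ℤ) % (p : ℤ) ^ i) + 1 ≤ (p : ℤ) ^ i := by
  have h3 : ¬ (3 ∣ p) := by
    intro h
    rcases hp.eq_one_or_self_of_dvd 3 h with h' | h' <;> omega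
  have hπ : 3 * (p / 3) + 1 ≤ p := by omega
  have hπp : 3 * ((p / 3 : ℕ) : ℤ) + 1 ≤ (p : ℤ) := by exact_mod_cast hπ
  have hp1 : (1 : ℤ) ≤ (p : ℤ) := by exact_mod_cast hp.one_lt.le
  induction hd with
  | @base a h =>
    intro i
    cases i with
    | zero => left; simp
    | succ j =>
      left
      have hpP : (p : ℤ) ≤ (p : ℤ) ^ (j + 1) := le_self_pow₀ hp1 (by omega)
      have ha0 : (0 : ℤ) ≤ (a : ℤ) := Int.natCast_nonneg a
      have hap : (a : ℤ) < (p : ℤ) ^ (j + 1) := by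
        have : (a : ℤ) < (p : ℤ) := by exact_mod_cast (show a < p by omega)
        linarith
      rw [Int.emod_eq_of_lt ha0 hap]
      have haπ : (a : ℤ) ≤ ((p / 3 : ℕ) : ℤ) := by exact_mod_cast h
      linarith
  | @step d' a hd' h1 h2 ih =>
    intro i
    cases i with
    | zero => left; simp
    | succ j =>
      have hP0 : (0 : ℤ) < (p : ℤ) ^ j := pow_pos (by linarith) j
      have hPP : (p : ℤ) ^ (j + 1) = (p : ℤ) * (p : ℤ) ^ j := by rw [pow_succ']
      have hppos : (0 : ℤ) < (p : ℤ) ^ (j + 1) := pow_pos (by linarith) (j + 1)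
      have hpP1 : (p : ℤ) ≤ (p : ℤ) ^ (j + 1) := le_self_pow₀ hp1 (by omega)
      set P : ℤ := (p : ℤ) ^ j with hPdef
      set r : ℤ := (d' : ℤ) % P with hrdef
      have hr0 : 0 ≤ r := Int.emod_nonneg _ (ne_of_gt hP0)
      have hrP : r < P := Int.emod_lt_of_pos _ hP0
      have hq : (d' : ℤ) = P * ((d' : ℤ) / P) + r := (Int.mul_ediv_add_emod _ _).symm
      set e : ℤ := (a : ℤ) - (p : ℤ) * (d' : ℤ) with hedef
      have he1 : -((p / 3 : ℕ) : ℤ) ≤ e := by rw [hedef]; linarith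
      have he2 : e ≤ ((p / 3 : ℕ) : ℤ) := by rw [hedef]; linarith
      have ha : (a : ℤ) = (p : ℤ) * (d' : ℤ) + e := by rw [hedef]; ring
      have hmod : (a : ℤ) % ((p : ℤ) ^ (j + 1)) =
          ((p : ℤ) * r + e) % ((p : ℤ) ^ (j + 1)) := by
        rw [hPP]
        conv_lhs =>
          rw [show (a : ℤ) = ((p : ℤ) * r + e) + ((p : ℤ) * P) * ((d' : ℤ) / P) by
            linear_combination ha + (p : ℤ) * hq]
        rw [Int.add_mul_emod_self_left]
      obtain hL | hR := ih j
      · rw [← hrdef] at hL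
        rcases le_or_gt 0 ((p : ℤ) * r + e) with hv | hv
        · left
          have h3r : (p : ℤ) * (3 * r) ≤ (p : ℤ) * (P - 1) :=
            mul_le_mul_of_nonneg_left (by linarith) (by linarith)
          have hub : 3 * ((p : ℤ) * r + e) + 1 ≤ (p : ℤ) ^ (j + 1) := by
            rw [hPP]; linarith
          rw [hmod, Int.emod_eq_of_lt hv (by linarith)]
          exact hub
        · right
          have hpr : (0 : ℤ) ≤ (p : ℤ) * r := mul_nonneg (by linarith) hr0
          have hmv : (a : ℤ) % ((p : ℤ) ^ (j + 1)) = ((p : ℤ) * r + e) + (p : ℤ) ^ (j + 1) := by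
            calc (a : ℤ) % ((p : ℤ) ^ (j + 1))
                = ((p : ℤ) * r + e) % ((p : ℤ) ^ (j + 1)) := hmod
              _ = ((((p : ℤ) * r + e + (p : ℤ) ^ (j + 1))) + ((p : ℤ) ^ (j + 1)) * (-1)) %
                    ((p : ℤ) ^ (j + 1)) := by congr 1; ring
              _ = ((p : ℤ) * r + e + (p : ℤ) ^ (j + 1)) % ((p : ℤ) ^ (j + 1)) :=
                  Int.add_mul_emod_self_left ..
              _ = (p : ℤ) * r + e + (p : ℤ) ^ (j + 1) :=
                  Int.emod_eq_of_lt (by linarith) (by linarith)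
          rw [hmv]
          linarith
      · rw [← hrdef] at hR
        right
        set w : ℤ := (p : ℤ) * (P - r) - e with hwdef
        have hPr1 : (1 : ℤ) ≤ P - r := by linarith
        have hpw : (p : ℤ) * 1 ≤ (p : ℤ) * (P - r) :=
          mul_le_mul_of_nonneg_left hPr1 (by linarith)
        have hw1 : 1 ≤ w := by rw [hwdef]; linarith
        have h3w : (p : ℤ) * (3 * (P - r)) ≤ (p : ℤ) * (P - 1) :=
          mul_le_mul_of_nonneg_left (by linarith) (by linarith)
        have hwub : 3 * w + 1 ≤ (p : ℤ) ^ (j + 1) := by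
          rw [hPP, hwdef]; linarith
        have hmv : (a : ℤ) % ((p : ℤ) ^ (j + 1)) = (p : ℤ) ^ (j + 1) - w := by
          rw [hmod, show ((p : ℤ) * r + e) = (p : ℤ) ^ (j + 1) - w by
            rw [hPP, hwdef]; ring]
          exact Int.emod_eq_of_lt (by linarith) (by linarith)
        rw [hmv]
        linarith

/-- Structural lemma about `D_p`, natural number version. -/
lemma Dp_nat {p : ℕ} (hp : p.Prime) (hp5 : 5 ≤ p) {d : ℕ} (hd : Dpmem p d) (i : ℕ) :
    3 * (d % p ^ i) + 1 ≤ p ^ i ∨ 3 * (p ^ i - d % p ^ i) + 1 ≤ p ^ i := by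
  have hc : ((d % p ^ i : ℕ) : ℤ) = (d : ℤ) % ((p : ℤ)) ^ i := by push_cast; ring
  have hc2 : ((p ^ i : ℕ) : ℤ) = ((p : ℤ)) ^ i := by push_cast; ring
  have hlt : d % p ^ i < p ^ i := Nat.mod_lt _ (pow_pos hp.pos i)
  obtain h | h := Dp_int hp hp5 hd i
  · rw [← hc, ← hc2] at h; left; exact_mod_cast h
  · rw [← hc, ← hc2] at h; right; omega

/-- Divisibility used in the main counting argument. -/
lemma dvd_key' {P d u v e : ℕ} (hP : 0 < P) (huv : u + v + e = 3 * d) :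
    P ∣ (u % P + v % P + 3 * (P - d % P) + e) := by
  have hrP : d % P < P := Nat.mod_lt _ hP
  have h1 : u % P + v % P + 3 * (P - d % P) + e ≡ u + v + 3 * (P - d % P) + e [MOD P] :=
    (((Nat.mod_modEq u P).add (Nat.mod_modEq v P)).add_right _).add_right _
  have h2 : u + v + 3 * (P - d % P) + e = 3 * d + 3 * (P - d % P) := by omega
  have h3 : 3 * d + 3 * (P - d % P) ≡ 3 * (d % P) + 3 * (P - d % P) [MOD P] :=
    Nat.ModEq.add_right _ ((Nat.ModEq.mul_left 3 (Nat.mod_modEq d P)).symm)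
  have h4 : 3 * (d % P) + 3 * (P - d % P) = P * 3 := by omega
  have h5 : u % P + v % P + 3 * (P - d % P) + e ≡ P * 3 [MOD P] := by
    rw [← h4]
    exact h1.trans (h2 ▸ h3)
  exact Nat.modEq_zero_iff_dvd.1 (h5.trans (Nat.modEq_zero_iff_dvd.2 ⟨3, rfl⟩))

/-- No multiple of `P` lies in the relevant interval. -/
lemma no_multiple' {P x y r e : ℕ} (hP : 0 < P) (hr : r < P) (hR : 3 * (P - r) + 1 ≤ P)
    (he : e ≤ 2) (hx : r ≤ x + e / 2) (hy : r ≤ y) (hx' : x < P) (hy' : y < P)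
    (hdvd : P ∣ (x + y + 3 * (P - r) + e)) : False := by
  obtain ⟨k, hk⟩ := hdvd
  have h1 : 2 * P < x + y + 3 * (P - r) + e := by omega
  have h2 : x + y + 3 * (P - r) + e < 3 * P := by omega
  rcases le_or_gt k 2 with hk2 | hk2
  · have h3 : P * k ≤ P * 2 := Nat.mul_le_mul (le_refl P) hk2
    omega
  · have h3 : P * 3 ≤ P * k := Nat.mul_le_mul (le_refl P) hk2
    omega

/-- Core counting lemma: the number of carries for `C(2d,d)` is at most the sum of those
for `C(u,d1)` and `C(v,d)`, whenever `u + v + e = 3d` with `d1 + e/2 = d`, `e ≤ 2`. -/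
lemma core_lemma {p : ℕ} (hp : p.Prime) (hp5 : 5 ≤ p) {d : ℕ} (hd : Dpmem p d)
    (d1 u v e : ℕ) (hu : d1 ≤ u) (hv : d ≤ v) (he : e ≤ 2) (hd1e : d1 + e / 2 = d)
    (huv : u + v + e = 3 * d) :
    padicValNat p ((2 * d).choose d) ≤
      padicValNat p (u.choose d1) + padicValNat p (v.choose d) := by
  haveI : Fact p.Prime := ⟨hp⟩
  have hub : u ≤ 3 * d := by omega
  have hvb : v ≤ 3 * d := by omega
  have h2d3d : 2 * d ≤ 3 * d := by omega
  have hd1b : d1 ≤ u := hu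
  rw [padicValNat_choose (p := p) (b := Nat.log p (3 * d) + 1) (show d ≤ 2 * d by omega)
        (lt_of_le_of_lt (Nat.log_mono_right h2d3d) (Nat.lt_succ_self _)),
      padicValNat_choose (p := p) (b := Nat.log p (3 * d) + 1) hu
        (lt_of_le_of_lt (Nat.log_mono_right hub) (Nat.lt_succ_self _)),
      padicValNat_choose (p := p) (b := Nat.log p (3 * d) + 1) hv
        (lt_of_le_of_lt (Nat.log_mono_right hvb) (Nat.lt_succ_self _))]
  refine le_trans (Finset.card_le_card ?_) (Finset.card_union_le _ _)
  intro i hi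
  simp only [Finset.mem_filter, Finset.mem_union] at hi ⊢
  obtain ⟨hmem, hcar⟩ := hi
  have hP : 0 < p ^ i := pow_pos hp.pos i
  have hrP : d % p ^ i < p ^ i := Nat.mod_lt _ hP
  have hcar' : p ^ i ≤ 2 * (d % p ^ i) := by
    have h1 : 2 * d - d = d := by omega
    rw [h1] at hcar; omega
  obtain hL | hR := Dp_nat hp hp5 hd i
  · exact absurd hcar' (by omega)
  · have hdisj : u % p ^ i < d1 % p ^ i ∨ v % p ^ i < d % p ^ i := by
      by_contra hcon
      push_neg at hcon
      obtain ⟨hx, hy⟩ := hcon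
      have hr1 : 1 ≤ d % p ^ i := by omega
      have hd1P : d1 % p ^ i = d % p ^ i - e / 2 := by
        rcases (show e / 2 = 0 ∨ e / 2 = 1 by omega) with h0 | h0
        · have hdd : d1 = d := by omega
          rw [hdd, h0]
          omega
        · have hmq : d1 + 1 = d := by omega
          apply mod_eq_of_modEq' ?_ (by omega)
          apply Nat.ModEq.add_right_cancel' 1
          rw [hmq, show d % p ^ i - e / 2 + 1 = d % p ^ i by omega]
          exact (Nat.mod_modEq d _).symm
      have hdvd : p ^ i ∣ (u % p ^ i + v % p ^ i + 3 * (p ^ i - d % p ^ i) + e) :=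
        dvd_key' hP huv
      exact no_multiple' hP hrP hR he (by omega) hy (Nat.mod_lt _ hP) (Nat.mod_lt _ hP) hdvd
    rcases hdisj with h | h
    · exact Or.inl ⟨hmem, (carry_iff' hP hu).2 h⟩
    · exact Or.inr ⟨hmem, (carry_iff' hP hv).2 h⟩

/-- Theorem 4(2): for a prime `p ≥ 5` and `d ∈ D_p`, the `p`-adic valuation of `C(2d,d)`
equals that of `C(3d,d)`, and `p^{v_p(C(2d,d))}` divides the products
`C(a,d)C(3d-a,d)`, `C(a,d)C(3d-1-a,d)` and `C(a,d-1)C(3d-2-a,d)` for `0 ≤ a ≤ 2d`.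
(Binomial coefficients with truncated-to-zero first argument are interpreted as `0`,
which is the behaviour of `Nat.choose` with truncated subtraction.) -/
theorem valuation_binomials_Dp (p : ℕ) (hp : p.Prime) (hp5 : 5 ≤ p)
    (d : ℕ) (hd : Dpmem p d) :
    padicValNat p ((2 * d).choose d) = padicValNat p ((3 * d).choose d) ∧
    (∀ a : ℕ, a ≤ 2 * d →
      p ^ padicValNat p ((2 * d).choose d) ∣ a.choose d * (3 * d - a).choose d) ∧
    (∀ a : ℕ, a ≤ 2 * d →
      p ^ padicValNat p ((2 * d).choose d) ∣ a.choose d * (3 * d - 1 - a).choose d) ∧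
    (∀ a : ℕ, a ≤ 2 * d →
      p ^ padicValNat p ((2 * d).choose d) ∣ a.choose (d - 1) * (3 * d - 2 - a).choose d) := by
  haveI : Fact p.Prime := ⟨hp⟩
  by_cases hd0 : d = 0
  · subst hd0
    refine ⟨rfl, ?_, ?_, ?_⟩ <;> · intro a ha; simp_all
  have hd1 : 1 ≤ d := by omega
  have final : ∀ (d1 u v : ℕ),
      padicValNat p ((2 * d).choose d) ≤
        padicValNat p (u.choose d1) + padicValNat p (v.choose d) →
      p ^ padicValNat p ((2 * d).choose d) ∣ u.choose d1 * v.choose d := by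
    intro d1 u v h
    exact dvd_trans (pow_dvd_pow p h)
      (by rw [pow_add]; exact mul_dvd_mul pow_padicValNat_dvd pow_padicValNat_dvd)
  refine ⟨?_, ?_, ?_, ?_⟩
  · -- part (a)
    rw [padicValNat_choose (p := p) (b := Nat.log p (3 * d) + 1) (show d ≤ 2 * d by omega)
          (lt_of_le_of_lt (Nat.log_mono_right (by omega)) (Nat.lt_succ_self _)),
        padicValNat_choose (p := p) (b := Nat.log p (3 * d) + 1) (show d ≤ 3 * d by omega)
          (Nat.lt_succ_self _)]
    congr 1
    apply Finset.filter_congr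
    intro i _
    have hP : 0 < p ^ i := pow_pos hp.pos i
    have hrP : d % p ^ i < p ^ i := Nat.mod_lt _ hP
    have e1 : 2 * d - d = d := by omega
    have e2 : 3 * d - d = 2 * d := by omega
    rw [e1, e2]
    obtain hL | hR := Dp_nat hp hp5 hd i
    · have h2d : (2 * d) % p ^ i = 2 * (d % p ^ i) :=
        mod_eq_of_modEq' ((Nat.mod_modEq d (p ^ i)).mul_left 2).symm (by omega)
      rw [h2d]; omega
    · have h2r : p ^ i ≤ 2 * (d % p ^ i) := by omega
      have h2d : (2 * d) % p ^ i = 2 * (d % p ^ i) - p ^ i :=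
        mod_eq_of_modEq'
          (((Nat.mod_modEq d (p ^ i)).mul_left 2).symm.trans (modEq_sub' h2r)) (by omega)
      rw [h2d]; omega
  · -- part (b)
    intro a ha
    by_cases had : d ≤ a
    · exact final d a (3 * d - a)
        (core_lemma hp hp5 hd d a (3 * d - a) 0 had (by omega) (by omega) (by omega) (by omega))
    · rw [Nat.choose_eq_zero_of_lt (show a < d by omega), zero_mul]; exact dvd_zero _
  · -- part (c)
    intro a ha
    by_cases had : d ≤ a
    · by_cases hc : d ≤ 3 * d - 1 - a
      · exact final d a (3 * d - 1 - a)
          (core_lemma hp hp5 hd d a (3 * d - 1 - a) 1 had hc (by omega) (by omega) (by omega))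
      · rw [Nat.choose_eq_zero_of_lt (show 3 * d - 1 - a < d by omega), mul_zero]; exact dvd_zero _
    · rw [Nat.choose_eq_zero_of_lt (show a < d by omega), zero_mul]; exact dvd_zero _
  · -- part (d)
    intro a ha
    by_cases had : d - 1 ≤ a
    · by_cases hc : d ≤ 3 * d - 2 - a
      · exact final (d - 1) a (3 * d - 2 - a)
          (core_lemma hp hp5 hd (d - 1) a (3 * d - 2 - a) 2 had hc (by omega) (by omega)
            (by omega))
      · rw [Nat.choose_eq_zero_of_lt (show 3 * d - 2 - a < d by omega), mul_zero]; exact dvd_zero _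
    · rw [Nat.choose_eq_zero_of_lt (show a < d - 1 by omega), zero_mul]; exact dvd_zero _
end

section
/- Let d ∈ D_3. Then: (a) v_3(C(2d,d)) = v_3(C(3d,d)); (b) v_3(C(2d+1,d)) = v_3(C(3d+2,d)); and for every integer a with 0 ≤ a ≤ 2d: (c) 3^{v_3(C(2d,d))} divides C(a,d)·C(3d−a,d); (d) 3^{v_3(C(2d,d))} divides C(a,d)·C(3d−1−a,d); (e) 3^{v_3(C(2d+1,d))} divides C(a,d)·C(3d+1−a,d+1). -/
/-- Membership in the set `D₃`: the smallest set of non-negative integers containing `0`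
and closed under `d ↦ 3d` and `d ↦ 3d + 2`. -/
inductive D3mem : ℕ → Prop where
  | zero : D3mem 0
  | mul3 {d : ℕ} : D3mem d → D3mem (3 * d)
  | mul3add2 {d : ℕ} : D3mem d → D3mem (3 * d + 2)

/-- Auxiliary mod computation: the residue of `3e + r` mod `3^(i+1)`. -/
lemma D3aux.key_mod (e r i : ℕ) (hr : r < 3) : (3*e + r) % 3^(i+1) = 3 * (e % 3^i) + r := by
  have h3 : (3:ℕ)^(i+1) = 3*3^i := by ring
  have h0 : 0 < (3:ℕ)^i := by positivity
  have hm : e % 3^i < 3^i := Nat.mod_lt _ h0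
  rw [h3, Nat.add_mod, Nat.mul_mod_mul_left,
    Nat.mod_eq_of_lt (show r < 3*3^i by omega), Nat.mod_eq_of_lt (by omega)]

/-- Case analysis for `x % P` when `x ≤ 2P`. -/
lemma D3aux.mod_cases (x P : ℕ) (hP : 0 < P) (hx : x ≤ 2*P) :
    (x < P ∧ x % P = x) ∨ (P ≤ x ∧ x < 2*P ∧ x % P = x - P) ∨ (x = 2*P ∧ x % P = 0) := by
  rcases lt_or_ge x P with h | h
  · exact .inl ⟨h, Nat.mod_eq_of_lt h⟩
  rcases lt_or_ge x (2*P) with h2 | h2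
  · exact .inr (.inl ⟨h, h2, by rw [Nat.mod_eq_sub_mod h, Nat.mod_eq_of_lt (by omega)]⟩)
  · have hx2 : x = 2*P := le_antisymm hx h2
    subst hx2
    exact .inr (.inr ⟨rfl, Nat.mul_mod_left 2 P⟩)

/-- The key structural property of members of `D₃`: every truncation `d % 3^(j+1)`
either is below `3^j` (top digit `0`) or at least `2·3^j` (top digit `2`). -/
lemma D3aux.d3_dich {d : ℕ} (hd : D3mem d) :
    ∀ j : ℕ, d % 3^(j+1) < 3^j ∨ 2*3^j ≤ d % 3^(j+1) := by
  induction hd with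
  | zero =>
      intro j; left
      simp only [Nat.zero_mod]
      positivity
  | @mul3 e he ih =>
      intro j
      have key := D3aux.key_mod e 0 j (by norm_num)
      simp only [add_zero] at key
      cases j with
      | zero =>
          left
          simp only [pow_one, pow_zero, Nat.mod_one, mul_zero] at key ⊢
          omega
      | succ i =>
          have hP : (3:ℕ)^(i+1) = 3*3^i := by ring
          rcases ih i with h | h <;> omega
  | @mul3add2 e he ih =>
      intro j
      have key := D3aux.key_mod e 2 j (by norm_num)
      cases j with
      | zero =>
          right
          simp only [pow_one, pow_zero, Nat.mod_one, mul_zero] at key ⊢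
          omega
      | succ i =>
          have hP : (3:ℕ)^(i+1) = 3*3^i := by ring
          rcases ih i with h | h <;> omega

/-- The carry set of Kummer's theorem for `p = 3`. -/
def D3aux.cs (b x y : ℕ) : Finset ℕ :=
  (Finset.Ico 1 b).filter fun i => 3^i ≤ x % 3^i + y % 3^i

open D3aux in
/-- Kummer's theorem for `p = 3`, phrased with the carry set. -/
lemma D3aux.kummer3 {n k b : ℕ} (hb : n + k < b) :
    padicValNat 3 ((n + k).choose k) = (cs b k n).card := by
  haveI : Fact (Nat.Prime 3) := ⟨by norm_num⟩
  exact padicValNat_choose' (lt_of_le_of_lt (Nat.log_le_self 3 _) hb)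

open D3aux in
lemma D3aux.partA {d : ℕ} (hd : D3mem d) (b : ℕ) : cs b d d = cs b d (2*d) := by
  refine Finset.filter_congr ?_
  intro i hi
  simp only [Finset.mem_Ico] at hi
  obtain ⟨j, rfl⟩ : ∃ j, i = j + 1 := ⟨i - 1, by omega⟩
  have hPQ : (3:ℕ)^(j+1) = 3*3^j := by ring
  have hQ : (0:ℕ) < 3^j := by positivity
  have hP : (0:ℕ) < 3^(j+1) := by positivity
  have hD : d % 3^(j+1) < 3^(j+1) := Nat.mod_lt _ hP
  have h1 : (2*d) % 3^(j+1) = (2*(d % 3^(j+1))) % 3^(j+1) :=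
    ((Nat.mod_modEq d _).mul_left 2).symm
  rcases mod_cases (2*(d % 3^(j+1))) (3^(j+1)) hP (by omega) with h2 | h2 | h2 <;>
    rcases d3_dich hd j with h | h <;> omega

open D3aux in
lemma D3aux.partB {d : ℕ} (hd : D3mem d) (b : ℕ) : cs b d (d+1) = cs b d (2*d+2) := by
  refine Finset.filter_congr ?_
  intro i hi
  simp only [Finset.mem_Ico] at hi
  obtain ⟨j, rfl⟩ : ∃ j, i = j + 1 := ⟨i - 1, by omega⟩
  have hPQ : (3:ℕ)^(j+1) = 3*3^j := by ring
  have hQ : (0:ℕ) < 3^j := by positivity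
  have hP : (0:ℕ) < 3^(j+1) := by positivity
  have hD : d % 3^(j+1) < 3^(j+1) := Nat.mod_lt _ hP
  have h1 : (d+1) % 3^(j+1) = ((d % 3^(j+1)) + 1) % 3^(j+1) :=
    ((Nat.mod_modEq d _).add_right 1).symm
  have h2 : (2*d+2) % 3^(j+1) = (2*(d % 3^(j+1)) + 2) % 3^(j+1) :=
    (((Nat.mod_modEq d _).mul_left 2).add_right 2).symm
  rcases mod_cases ((d % 3^(j+1)) + 1) (3^(j+1)) hP (by omega) with h3 | h3 | h3 <;>
    rcases mod_cases (2*(d % 3^(j+1)) + 2) (3^(j+1)) hP (by omega) with h4 | h4 | h4 <;>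
      rcases d3_dich hd j with h | h <;> omega

open D3aux in
lemma D3aux.partCD {d u v t : ℕ} (hd : D3mem d) (ht : t ≤ 1) (huv : u + v + t = d) (b : ℕ) :
    cs b d d ⊆ cs b d u ∪ cs b d v := by
  intro i hi
  simp only [cs, Finset.mem_filter, Finset.mem_union, Finset.mem_Ico] at hi ⊢
  obtain ⟨⟨hi1, hib⟩, hcond⟩ := hi
  obtain ⟨j, rfl⟩ : ∃ j, i = j + 1 := ⟨i - 1, by omega⟩
  have hPQ : (3:ℕ)^(j+1) = 3*3^j := by ring
  have hQ : (0:ℕ) < 3^j := by positivity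
  have hP : (0:ℕ) < 3^(j+1) := by positivity
  have hD : d % 3^(j+1) < 3^(j+1) := Nat.mod_lt _ hP
  have h2Q : 2*3^j ≤ d % 3^(j+1) := by
    rcases d3_dich hd j with h | h <;> omega
  have hTD : t ≤ d % 3^(j+1) := by omega
  have hdm := Nat.div_add_mod d (3^(j+1))
  have e1 : d - t = 3^(j+1)*(d/3^(j+1)) + (d % 3^(j+1) - t) := by
    rw [← Nat.add_sub_assoc hTD, hdm]
  have huvP : (u + v) % 3^(j+1) = d % 3^(j+1) - t := by
    rw [show u + v = d - t from by omega, e1, Nat.mul_add_mod, Nat.mod_eq_of_lt (by omega)]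
  have hBC : (u % 3^(j+1) + v % 3^(j+1)) % 3^(j+1) = (u + v) % 3^(j+1) :=
    (Nat.mod_modEq u _).add (Nat.mod_modEq v _)
  have hu : u % 3^(j+1) < 3^(j+1) := Nat.mod_lt _ hP
  have hv : v % 3^(j+1) < 3^(j+1) := Nat.mod_lt _ hP
  rcases mod_cases (u % 3^(j+1) + v % 3^(j+1)) (3^(j+1)) hP (by omega) with h | h | h <;> omega

open D3aux in
lemma D3aux.partE {d u v : ℕ} (hd : D3mem d) (huv : u + v = d) (b : ℕ) :
    cs b d (d+1) ⊆ cs b d u ∪ cs b (d+1) v := by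
  intro i hi
  simp only [cs, Finset.mem_filter, Finset.mem_union, Finset.mem_Ico] at hi ⊢
  obtain ⟨⟨hi1, hib⟩, hcond⟩ := hi
  obtain ⟨j, rfl⟩ : ∃ j, i = j + 1 := ⟨i - 1, by omega⟩
  have hPQ : (3:ℕ)^(j+1) = 3*3^j := by ring
  have hQ : (0:ℕ) < 3^j := by positivity
  have hP : (0:ℕ) < 3^(j+1) := by positivity
  have hD : d % 3^(j+1) < 3^(j+1) := Nat.mod_lt _ hP
  have h3 : (d+1) % 3^(j+1) = ((d % 3^(j+1)) + 1) % 3^(j+1) :=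
    ((Nat.mod_modEq d _).add_right 1).symm
  have huvP : (u + v) % 3^(j+1) = d % 3^(j+1) := by rw [huv]
  have hBC : (u % 3^(j+1) + v % 3^(j+1)) % 3^(j+1) = (u + v) % 3^(j+1) :=
    (Nat.mod_modEq u _).add (Nat.mod_modEq v _)
  have hu : u % 3^(j+1) < 3^(j+1) := Nat.mod_lt _ hP
  have hv : v % 3^(j+1) < 3^(j+1) := Nat.mod_lt _ hP
  rcases mod_cases ((d % 3^(j+1)) + 1) (3^(j+1)) hP (by omega) with h4 | h4 | h4 <;>
    rcases d3_dich hd j with hh | hh <;>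
      rcases mod_cases (u % 3^(j+1) + v % 3^(j+1)) (3^(j+1)) hP (by omega) with h | h | h <;>
        omega

open D3aux in
/-- Theorem 4(1): for `d ∈ D₃`, the `3`-adic valuations of `C(2d,d)` and `C(3d,d)` agree,
those of `C(2d+1,d)` and `C(3d+2,d)` agree, and `3^{v_3(C(2d,d))}` divides
`C(a,d)C(3d-a,d)` and `C(a,d)C(3d-1-a,d)`, while `3^{v_3(C(2d+1,d))}` divides
`C(a,d)C(3d+1-a,d+1)`, for all `0 ≤ a ≤ 2d`.
(Binomial coefficients with truncated-to-zero first argument are interpreted as `0`,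
which is the behaviour of `Nat.choose` with truncated subtraction.) -/
theorem valuation_binomials_D3 (d : ℕ) (hd : D3mem d) :
    padicValNat 3 ((2 * d).choose d) = padicValNat 3 ((3 * d).choose d) ∧
    padicValNat 3 ((2 * d + 1).choose d) = padicValNat 3 ((3 * d + 2).choose d) ∧
    (∀ a : ℕ, a ≤ 2 * d →
      3 ^ padicValNat 3 ((2 * d).choose d) ∣ a.choose d * (3 * d - a).choose d) ∧
    (∀ a : ℕ, a ≤ 2 * d →
      3 ^ padicValNat 3 ((2 * d).choose d) ∣ a.choose d * (3 * d - 1 - a).choose d) ∧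
    (∀ a : ℕ, a ≤ 2 * d →
      3 ^ padicValNat 3 ((2 * d + 1).choose d) ∣ a.choose d * (3 * d + 1 - a).choose (d + 1)) := by
  have k1 : padicValNat 3 ((2*d).choose d) = (cs (3*d+3) d d).card := by
    rw [two_mul]; exact kummer3 (by omega)
  have k1' : padicValNat 3 ((2*d+1).choose d) = (cs (3*d+3) d (d+1)).card := by
    rw [show 2*d+1 = (d+1)+d from by ring]; exact kummer3 (by omega)
  refine ⟨?_, ?_, ?_, ?_, ?_⟩
  · -- (a)
    have k2 : padicValNat 3 ((3*d).choose d) = (cs (3*d+3) d (2*d)).card := by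
      rw [show 3*d = 2*d+d from by ring]; exact kummer3 (by omega)
    rw [k1, k2, partA hd]
  · -- (b)
    have k2 : padicValNat 3 ((3*d+2).choose d) = (cs (3*d+3) d (2*d+2)).card := by
      rw [show 3*d+2 = (2*d+2)+d from by ring]; exact kummer3 (by omega)
    rw [k1', k2, partB hd]
  · -- (c)
    intro a ha
    rcases lt_or_ge a d with h | h
    · simp [Nat.choose_eq_zero_of_lt h]
    obtain ⟨u, rfl⟩ : ∃ u, a = u + d := ⟨a - d, by omega⟩
    have k2 : padicValNat 3 ((u + d).choose d) = (cs (3*d+3) d u).card := kummer3 (by omega)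
    have k3 : padicValNat 3 ((3*d - (u + d)).choose d) = (cs (3*d+3) d (d - u)).card := by
      rw [show 3*d - (u + d) = (d - u) + d from by omega]; exact kummer3 (by omega)
    have hsub := partCD (t := 0) hd (by norm_num) (show u + (d - u) + 0 = d from by omega) (3*d+3)
    have hle : padicValNat 3 ((2*d).choose d) ≤
        padicValNat 3 ((u + d).choose d) + padicValNat 3 ((3*d - (u + d)).choose d) := by
      rw [k1, k2, k3]
      exact le_trans (Finset.card_le_card hsub) (Finset.card_union_le _ _)
    exact dvd_trans (pow_dvd_pow 3 hle)
      (by rw [pow_add]; exact mul_dvd_mul pow_padicValNat_dvd pow_padicValNat_dvd)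
  · -- (d)
    intro a ha
    rcases Nat.eq_zero_or_pos d with rfl | hd1
    · obtain rfl : a = 0 := by omega
      simp
    rcases lt_or_ge a d with h | h
    · simp [Nat.choose_eq_zero_of_lt h]
    rcases Nat.lt_or_ge a (2*d) with h2 | h2
    · -- d ≤ a ≤ 2d - 1
      obtain ⟨u, rfl⟩ : ∃ u, a = u + d := ⟨a - d, by omega⟩
      have k2 : padicValNat 3 ((u + d).choose d) = (cs (3*d+3) d u).card := kummer3 (by omega)
      have k3 : padicValNat 3 ((3*d - 1 - (u + d)).choose d)
          = (cs (3*d+3) d (d - 1 - u)).card := by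
        rw [show 3*d - 1 - (u + d) = (d - 1 - u) + d from by omega]; exact kummer3 (by omega)
      have hsub := partCD (t := 1) hd le_rfl (show u + (d - 1 - u) + 1 = d from by omega) (3*d+3)
      have hle : padicValNat 3 ((2*d).choose d) ≤
          padicValNat 3 ((u + d).choose d) + padicValNat 3 ((3*d - 1 - (u + d)).choose d) := by
        rw [k1, k2, k3]
        exact le_trans (Finset.card_le_card hsub) (Finset.card_union_le _ _)
      exact dvd_trans (pow_dvd_pow 3 hle)
        (by rw [pow_add]; exact mul_dvd_mul pow_padicValNat_dvd pow_padicValNat_dvd)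
    · -- a = 2d
      have h3 : 3*d - 1 - a = d - 1 := by omega
      rw [h3, Nat.choose_eq_zero_of_lt (show d - 1 < d from by omega)]
      simp
  · -- (e)
    intro a ha
    rcases lt_or_ge a d with h | h
    · simp [Nat.choose_eq_zero_of_lt h]
    obtain ⟨u, rfl⟩ : ∃ u, a = u + d := ⟨a - d, by omega⟩
    have k2 : padicValNat 3 ((u + d).choose d) = (cs (3*d+3) d u).card := kummer3 (by omega)
    have k3 : padicValNat 3 ((3*d + 1 - (u + d)).choose (d + 1))
        = (cs (3*d+3) (d + 1) (d - u)).card := by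
      rw [show 3*d + 1 - (u + d) = (d - u) + (d + 1) from by omega]; exact kummer3 (by omega)
    have hsub := partE hd (show u + (d - u) = d from by omega) (3*d+3)
    have hle : padicValNat 3 ((2*d+1).choose d) ≤
        padicValNat 3 ((u + d).choose d) + padicValNat 3 ((3*d + 1 - (u + d)).choose (d + 1)) := by
      rw [k1', k2, k3]
      exact le_trans (Finset.card_le_card hsub) (Finset.card_union_le _ _)
    exact dvd_trans (pow_dvd_pow 3 hle)
      (by rw [pow_add]; exact mul_dvd_mul pow_padicValNat_dvd pow_padicValNat_dvd)
end

section
/- Let p ≥ 3 be a prime, let d ≥ 1 be an integer, and let ε be an integer with −p/3 < ε < p/3; set D = pd + ε (a positive integer). Then: (a) if ε < 0 then v_p(C(2D,D)) = v_p(p·d·C(2d,d)), and if 0 ≤ ε then v_p(C(2D,D)) = v_p(C(2d,d)); (b) if ε < 0 then v_p(C(3D,D)) = v_p(p·d·C(3d−1,d−1)), and if 0 ≤ ε then v_p(C(3D,D)) = v_p(C(3d,d)). -/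
open Nat

/-- Digit sum of `p*n + r` for `r < p`. -/
private lemma sumdigits_mul_add (p : ℕ) (hp : 1 < p) (n r : ℕ) (hr : r < p) :
    (p.digits (p * n + r)).sum = r + (p.digits n).sum := by
  rcases Nat.eq_zero_or_pos (p * n + r) with h | h
  · have hn : p * n = 0 := by omega
    have hn' : n = 0 := by
      rcases Nat.mul_eq_zero.mp hn with h' | h' <;> omega
    have hr' : r = 0 := by omega
    simp [hn', hr']
  · rw [Nat.digits_def' hp h]
    have h1 : (p * n + r) % p = r := by
      rw [Nat.mul_add_mod]; exact Nat.mod_eq_of_lt hr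
    have h2 : (p * n + r) / p = n := by
      rw [Nat.mul_add_div (by omega), Nat.div_eq_of_lt hr]; omega
    simp [h1, h2]

/-- Subtracting one from a positive number: digit sum relation. -/
private lemma sumdigits_sub_one (p : ℕ) (hp : p.Prime) :
    ∀ n : ℕ, 0 < n →
      (p.digits (n - 1)).sum + 1 = (p.digits n).sum + (p - 1) * padicValNat p n := by
  haveI : Fact p.Prime := ⟨hp⟩
  have hp1 : 1 < p := hp.one_lt
  intro n
  induction n using Nat.strong_induction_on with
  | _ n ih =>
    intro hn
    by_cases hdvd : p ∣ n
    · obtain ⟨m, rfl⟩ := hdvd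
      have hm : 0 < m := by
        rcases Nat.eq_zero_or_pos m with h | h
        · simp [h] at hn
        · exact h
      have hmlt : m < p * m := by
        calc m = 1 * m := (one_mul m).symm
        _ < p * m := by exact Nat.mul_lt_mul_of_lt_of_le hp1 le_rfl hm
      have ihm := ih m hmlt hm
      have hsn : (p.digits (p * m)).sum = (p.digits m).sum := by
        have := sumdigits_mul_add p hp1 m 0 (by omega)
        simpa using this
      have hsn1 : (p.digits (p * m - 1)).sum = (p - 1) + (p.digits (m - 1)).sum := by
        have heq : p * m - 1 = p * (m - 1) + (p - 1) := by
          have h1 : p * m = p * (m - 1) + p := by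
            have h2 : m = (m - 1) + 1 := by omega
            calc p * m = p * ((m - 1) + 1) := by rw [← h2]
            _ = p * (m - 1) + p := by ring
          omega
        rw [heq]
        exact sumdigits_mul_add p hp1 (m - 1) (p - 1) (by omega)
      have hv : padicValNat p (p * m) = padicValNat p m + 1 := by
        rw [padicValNat.mul (by omega) (by omega), padicValNat.self hp1]
        omega
      rw [hsn, hsn1, hv, Nat.mul_add, mul_one]
      omega
    · have hr : 1 ≤ n % p := by
        rcases Nat.eq_zero_or_pos (n % p) with h | h
        · exact absurd (Nat.dvd_of_mod_eq_zero h) hdvd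
        · exact h
      have hrp : n % p < p := Nat.mod_lt n (by omega)
      have hs : (p.digits n).sum = n % p + (p.digits (n / p)).sum := by
        have heq : n = p * (n / p) + n % p := by
          have := Nat.div_add_mod n p; omega
        conv_lhs => rw [heq]
        exact sumdigits_mul_add p hp1 (n / p) (n % p) hrp
      have hs1 : (p.digits (n - 1)).sum = (n % p - 1) + (p.digits (n / p)).sum := by
        have heq : n - 1 = p * (n / p) + (n % p - 1) := by
          have := Nat.div_add_mod n p; omega
        rw [heq]
        exact sumdigits_mul_add p hp1 (n / p) (n % p - 1) (by omega)
      have hv : padicValNat p n = 0 := padicValNat.eq_zero_of_not_dvd hdvd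
      rw [hs, hs1, hv, Nat.mul_zero]
      omega

/-- Additive form of Kummer's theorem. -/
private lemma kummer_add (p : ℕ) (hp : p.Prime) {a b : ℕ} (h : b ≤ a) :
    (p - 1) * padicValNat p (a.choose b) + (p.digits a).sum
      = (p.digits b).sum + (p.digits (a - b)).sum := by
  haveI : Fact p.Prime := ⟨hp⟩
  have hc : a.choose b ≠ 0 := (Nat.choose_pos h).ne'
  have hv : padicValNat p (a.choose b) + padicValNat p (b !) + padicValNat p ((a - b)!)
      = padicValNat p (a !) := by
    rw [← Nat.choose_mul_factorial_mul_factorial h,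
      padicValNat.mul (Nat.mul_ne_zero hc (Nat.factorial_ne_zero b)) (Nat.factorial_ne_zero _),
      padicValNat.mul hc (Nat.factorial_ne_zero b)]
  have hmul : (p - 1) * padicValNat p (a.choose b) + (p - 1) * padicValNat p (b !)
      + (p - 1) * padicValNat p ((a - b)!) = (p - 1) * padicValNat p (a !) := by
    rw [← Nat.mul_add, ← Nat.mul_add, hv]
  have hfa := sub_one_mul_padicValNat_factorial (p := p) a
  have hfb := sub_one_mul_padicValNat_factorial (p := p) b
  have hfab := sub_one_mul_padicValNat_factorial (p := p) (a - b)
  have hda := Nat.digit_sum_le p a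
  have hdb := Nat.digit_sum_le p b
  have hdab := Nat.digit_sum_le p (a - b)
  omega

/-- Lemma (Aug21), parts (a) and (b): let `p ≥ 3` be prime, `d ≥ 1`, and `ε` an integer
with `-p/3 < ε < p/3`; set `D = pd + ε` (a positive integer, realized as `(p*d+ε).toNat`).
Then `v_p(C(2D,D))` equals `v_p(pd·C(2d,d))` if `ε < 0` and `v_p(C(2d,d))` if `0 ≤ ε`;
and `v_p(C(3D,D))` equals `v_p(pd·C(3d-1,d-1))` if `ε < 0` and `v_p(C(3d,d))` if `0 ≤ ε`. -/
theorem valuation_central_binomials_shift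
    (p : ℕ) (hp : p.Prime) (hp3 : 3 ≤ p) (d : ℕ) (hd : 1 ≤ d) (ε : ℤ)
    (hlo : -(p : ℚ) / 3 < (ε : ℚ)) (hhi : (ε : ℚ) < (p : ℚ) / 3) :
    (∀ D : ℕ, (D : ℤ) = (p : ℤ) * d + ε →
      ((ε < 0 →
          padicValNat p ((2 * D).choose D) = padicValNat p (p * d * (2 * d).choose d)) ∧
       (0 ≤ ε →
          padicValNat p ((2 * D).choose D) = padicValNat p ((2 * d).choose d)) ∧
       (ε < 0 →
          padicValNat p ((3 * D).choose D) =
            padicValNat p (p * d * (3 * d - 1).choose (d - 1))) ∧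
       (0 ≤ ε →
          padicValNat p ((3 * D).choose D) = padicValNat p ((3 * d).choose d)))) := by
  haveI : Fact p.Prime := ⟨hp⟩
  have hp1 : 1 < p := hp.one_lt
  obtain ⟨d', rfl⟩ : ∃ d', d = d' + 1 := ⟨d - 1, by omega⟩
  have h3lo : -(p : ℤ) < 3 * ε := by
    have : -(p : ℚ) < 3 * (ε : ℚ) := by linarith
    exact_mod_cast this
  have h3hi : 3 * ε < (p : ℤ) := by
    have : 3 * (ε : ℚ) < (p : ℚ) := by linarith
    exact_mod_cast this
  intro D hD
  have hDM : (D : ℤ) = ((p * (d' + 1) : ℕ) : ℤ) + ε := by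
    rw [hD]; push_cast; ring
  -- common facts
  have hvp : padicValNat p p = 1 := padicValNat.self hp1
  have hv2 : padicValNat p 2 = 0 := by
    apply padicValNat.eq_zero_of_not_dvd
    intro hdvd
    have := Nat.le_of_dvd (by norm_num) hdvd
    omega
  have hveq : padicValNat p (2 * (d' + 1)) = padicValNat p (d' + 1) := by
    rw [padicValNat.mul (by norm_num) (by omega), hv2, zero_add]
  -- sub-one digit relations
  have hsub1 : (p.digits d').sum + 1
      = (p.digits (d' + 1)).sum + (p - 1) * padicValNat p (d' + 1) := by
    have h := sumdigits_sub_one p hp (d' + 1) (by omega)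
    rwa [show d' + 1 - 1 = d' by omega] at h
  have hsub2 : (p.digits (2 * d' + 1)).sum + 1
      = (p.digits (2 * (d' + 1))).sum + (p - 1) * padicValNat p (d' + 1) := by
    have h := sumdigits_sub_one p hp (2 * (d' + 1)) (by omega)
    rwa [show 2 * (d' + 1) - 1 = 2 * d' + 1 by omega, hveq] at h
  have hsum22 : (p.digits (2 * (d' + 1))).sum = (p.digits (2 * d' + 2)).sum := by
    rw [show 2 * (d' + 1) = 2 * d' + 2 by ring]
  -- Kummer for the D side
  have hK1 := kummer_add p hp (show D ≤ 2 * D by omega)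
  rw [show 2 * D - D = D by omega] at hK1
  have hK3 := kummer_add p hp (show D ≤ 3 * D by omega)
  rw [show 3 * D - D = 2 * D by omega] at hK3
  -- Kummer for the d side
  have hK2 := kummer_add p hp (show d' + 1 ≤ 2 * (d' + 1) by omega)
  rw [show 2 * (d' + 1) - (d' + 1) = d' + 1 by omega] at hK2
  rcases lt_or_ge ε 0 with hε | hε
  · -- negative ε
    obtain ⟨e, he⟩ : ∃ e : ℕ, (e : ℤ) = -ε := ⟨(-ε).toNat, Int.toNat_of_nonneg (by omega)⟩
    have he1 : 1 ≤ e := by omega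
    have he3 : 3 * e < p := by omega
    have hMp : p * (d' + 1) = p * d' + p := by ring
    have hD1 : D = p * d' + (p - e) := by omega
    have h2D : 2 * D = p * (2 * d' + 1) + (p - 2 * e) := by
      have h : p * (2 * d' + 1) = p * d' + p * d' + p := by ring
      omega
    have h3D : 3 * D = p * (3 * d' + 2) + (p - 3 * e) := by
      have h : p * (3 * d' + 2) = p * d' + p * d' + p * d' + p + p := by ring
      omega
    have hsD : (p.digits D).sum = (p - e) + (p.digits d').sum := by
      rw [hD1]; exact sumdigits_mul_add p hp1 d' _ (by omega)
    have hs2D : (p.digits (2 * D)).sum = (p - 2 * e) + (p.digits (2 * d' + 1)).sum := by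
      rw [h2D]; exact sumdigits_mul_add p hp1 (2 * d' + 1) _ (by omega)
    have hs3D : (p.digits (3 * D)).sum = (p - 3 * e) + (p.digits (3 * d' + 2)).sum := by
      rw [h3D]; exact sumdigits_mul_add p hp1 (3 * d' + 2) _ (by omega)
    refine ⟨fun _ => ?_, fun h => absurd h (by omega), fun _ => ?_,
      fun h => absurd h (by omega)⟩
    · -- part (a), ε < 0
      have hrhs : padicValNat p (p * (d' + 1) * (2 * (d' + 1)).choose (d' + 1))
          = 1 + padicValNat p (d' + 1)
            + padicValNat p ((2 * (d' + 1)).choose (d' + 1)) := by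
        rw [padicValNat.mul (Nat.mul_ne_zero (by omega) (by omega))
            (Nat.choose_pos (by omega)).ne',
          padicValNat.mul (by omega) (by omega), hvp]
      rw [hrhs]
      apply Nat.eq_of_mul_eq_mul_left (show 0 < p - 1 by omega)
      rw [Nat.mul_add, Nat.mul_add, Nat.mul_one]
      omega
    · -- part (b), ε < 0
      rw [show 3 * (d' + 1) - 1 = 3 * d' + 2 from by omega,
        show d' + 1 - 1 = d' from by omega]
      have hK4 := kummer_add p hp (show d' ≤ 3 * d' + 2 by omega)
      rw [show 3 * d' + 2 - d' = 2 * d' + 2 by omega] at hK4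
      have hrhs : padicValNat p (p * (d' + 1) * (3 * d' + 2).choose d')
          = 1 + padicValNat p (d' + 1) + padicValNat p ((3 * d' + 2).choose d') := by
        rw [padicValNat.mul (Nat.mul_ne_zero (by omega) (by omega))
            (Nat.choose_pos (by omega)).ne',
          padicValNat.mul (by omega) (by omega), hvp]
      rw [hrhs]
      apply Nat.eq_of_mul_eq_mul_left (show 0 < p - 1 by omega)
      rw [Nat.mul_add, Nat.mul_add, Nat.mul_one]
      omega
  · -- nonnegative ε
    obtain ⟨e, he⟩ : ∃ e : ℕ, (e : ℤ) = ε := ⟨ε.toNat, Int.toNat_of_nonneg hε⟩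
    have he3 : 3 * e < p := by omega
    have hD1 : D = p * (d' + 1) + e := by omega
    have h2D : 2 * D = p * (2 * (d' + 1)) + 2 * e := by
      have h : p * (2 * (d' + 1)) = p * (d' + 1) + p * (d' + 1) := by ring
      omega
    have h3D : 3 * D = p * (3 * (d' + 1)) + 3 * e := by
      have h : p * (3 * (d' + 1)) = p * (d' + 1) + p * (d' + 1) + p * (d' + 1) := by ring
      omega
    have hsD : (p.digits D).sum = e + (p.digits (d' + 1)).sum := by
      rw [hD1]; exact sumdigits_mul_add p hp1 (d' + 1) _ (by omega)
    have hs2D : (p.digits (2 * D)).sum = 2 * e + (p.digits (2 * (d' + 1))).sum := by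
      rw [h2D]; exact sumdigits_mul_add p hp1 (2 * (d' + 1)) _ (by omega)
    have hs3D : (p.digits (3 * D)).sum = 3 * e + (p.digits (3 * (d' + 1))).sum := by
      rw [h3D]; exact sumdigits_mul_add p hp1 (3 * (d' + 1)) _ (by omega)
    refine ⟨fun h => absurd h (by omega), fun _ => ?_, fun h => absurd h (by omega),
      fun _ => ?_⟩
    · -- part (a), ε ≥ 0
      apply Nat.eq_of_mul_eq_mul_left (show 0 < p - 1 by omega)
      omega
    · -- part (b), ε ≥ 0
      have hK4 := kummer_add p hp (show d' + 1 ≤ 3 * (d' + 1) by omega)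
      rw [show 3 * (d' + 1) - (d' + 1) = 2 * (d' + 1) by omega] at hK4
      apply Nat.eq_of_mul_eq_mul_left (show 0 < p - 1 by omega)
      omega
end

section
/- For every positive integer δ, the identity P_{2δ}(A,B,C) + 3A·P_{2δ−1}(A,B,C) + (−1)^δ·A·(A+B+C)·Poly_{δ−1,δ,δ}(A,B)·Poly_{δ−1,δ,δ}(A,C) = 0 holds in ℤ[A,B,C]. -/
/-!
Write `p, s, q, q'` for `Poly_{δ,δ,δ}`, `Poly_{δ−1,δ,δ}`, `Poly_{δ−1,δ,δ−1}`, `Poly_{δ−1,δ−1,δ}` at `(A, Y)`.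
The reflection `Poly_{d,a,b}(B,A) = (−1)^d Poly_{d,b,a}(A,B)` brings every factor into this form, the
`A^{2δ}` terms cancel because `C(3δ,δ) = 3 C(3δ−1,δ−1)`, and the left-hand side becomes `(−1)^{δ+1}` times
`u_B u_C − v_B v_C − 3 w_B w_C + 3 x_B x_C`, where `u = p + Y s`, `v = (A + Y) s`, `w = A q − Y q'` and
`x = Y q'`. This vanishes because `u = 2w + x` and `v = w + 2x`.

Coefficientwise, `v = w + 2x` is Pascal's rule. The relation `u = 2w + x` is special to the diagonal
indices: since `Poly_{d,a,b}(A,Y) = [t^d] (1 − At)^{−a−1} (1 + Yt)^{−b−1}`, it says that the residue of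
the derivative of `(t (1 − At)(1 + Yt))^{−δ}` vanishes.
-/

noncomputable section

/-- The variables `A`, `B`, `C` of `ℤ[A,B,C]`. -/
def pA : MvPolynomial (Fin 3) ℤ := MvPolynomial.X 0
def pB : MvPolynomial (Fin 3) ℤ := MvPolynomial.X 1
def pC : MvPolynomial (Fin 3) ℤ := MvPolynomial.X 2

/-- `Poly_{d,a,b}(A,B) = Σ_{i=0}^{d} (−1)^i C(a+d−i,a) C(b+i,b) A^{d−i} B^i`. -/
def PolyDAB (d a b : ℕ) (A B : MvPolynomial (Fin 3) ℤ) : MvPolynomial (Fin 3) ℤ :=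
  ∑ i ∈ Finset.range (d + 1),
    MvPolynomial.C ((-1 : ℤ) ^ i * ((a + d - i).choose a : ℤ) * ((b + i).choose b : ℤ)) *
      A ^ (d - i) * B ^ i

/-- The polynomial `𝔓_{2δ−1}(A,B,C)`. -/
def frakPodd (δ : ℕ) : MvPolynomial (Fin 3) ℤ :=
  MvPolynomial.C ((-1 : ℤ) ^ δ) *
      (pA * PolyDAB (δ - 1) δ (δ - 1) pA pB * PolyDAB (δ - 1) δ (δ - 1) pA pC)
    + pB * PolyDAB (δ - 1) δ (δ - 1) pB pA * PolyDAB (δ - 1) δ (δ - 1) pA pC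
    + pC * PolyDAB (δ - 1) δ (δ - 1) pA pB * PolyDAB (δ - 1) δ (δ - 1) pC pA

/-- The polynomial `𝔓_{2δ}(A,B,C)`. -/
def frakPeven (δ : ℕ) : MvPolynomial (Fin 3) ℤ :=
  MvPolynomial.C ((-1 : ℤ) ^ (δ + 1)) *
      (PolyDAB δ δ δ pA pB * PolyDAB δ δ δ pA pC)
    + pB * PolyDAB (δ - 1) δ δ pB pA * PolyDAB δ δ δ pA pC
    + pC * PolyDAB δ δ δ pA pB * PolyDAB (δ - 1) δ δ pC pA

/-- `P_{2δ−1}(A,B,C) = 𝔓_{2δ−1}(A,B,C) + (−1)^{δ+1} C(2δ,δ) C(3δ−1,δ−1) A^{2δ−1}`. -/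
def Podd (δ : ℕ) : MvPolynomial (Fin 3) ℤ :=
  frakPodd δ +
    MvPolynomial.C ((-1 : ℤ) ^ (δ + 1) * ((2 * δ).choose δ : ℤ) *
      ((3 * δ - 1).choose (δ - 1) : ℤ)) * pA ^ (2 * δ - 1)

/-- `P_{2δ}(A,B,C) = 𝔓_{2δ}(A,B,C) + (−1)^δ C(2δ,δ) C(3δ,δ) A^{2δ}`. -/
def Peven (δ : ℕ) : MvPolynomial (Fin 3) ℤ :=
  frakPeven δ +
    MvPolynomial.C ((-1 : ℤ) ^ δ * ((2 * δ).choose δ : ℤ) * ((3 * δ).choose δ : ℤ)) *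
      pA ^ (2 * δ)

open Finset MvPolynomial

section BinaryForm

variable {R : Type*} [CommSemiring R] (n : ℕ) (A Y : R)

def binaryForm (c : ℕ → R) : R :=
  ∑ i ∈ range (n + 1), c i * A ^ (n - i) * Y ^ i

variable {n A Y}

theorem binaryForm_congr {c c' : ℕ → R} (h : ∀ i ≤ n, c i = c' i) :
    binaryForm n A Y c = binaryForm n A Y c' :=
  sum_congr rfl fun i hi => by rw [h i (Nat.lt_succ_iff.mp (mem_range.mp hi))]

theorem binaryForm_add (c c' : ℕ → R) :
    binaryForm n A Y c + binaryForm n A Y c' = binaryForm n A Y (fun i => c i + c' i) := by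
  simp only [binaryForm, ← sum_add_distrib, add_mul]

theorem mul_binaryForm (r : R) (c : ℕ → R) :
    r * binaryForm n A Y c = binaryForm n A Y (fun i => r * c i) := by
  simp only [binaryForm, mul_sum, mul_assoc]

theorem fst_mul_binaryForm {c : ℕ → R} (hc : c (n + 1) = 0) :
    A * binaryForm n A Y c = binaryForm (n + 1) A Y c := by
  rw [binaryForm, binaryForm, sum_range_succ _ (n + 1), hc, zero_mul, zero_mul, add_zero, mul_sum]
  refine sum_congr rfl fun i hi => ?_
  rw [Nat.sub_add_comm (Nat.lt_succ_iff.mp (mem_range.mp hi)), pow_succ]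
  ring

theorem snd_mul_binaryForm (c : ℕ → R) :
    Y * binaryForm n A Y c = binaryForm (n + 1) A Y (fun i => if i = 0 then 0 else c (i - 1)) := by
  simp only [binaryForm, sum_range_succ' _ (n + 1), if_pos, zero_mul, add_zero, mul_sum,
    Nat.succ_ne_zero, if_false, Nat.add_sub_cancel, Nat.add_sub_add_right, pow_succ]
  exact sum_congr rfl fun i _ => by ring

theorem binaryForm_swap (c : ℕ → R) :
    binaryForm n Y A c = binaryForm n A Y (fun i => c (n - i)) := by
  rw [binaryForm, binaryForm, ← sum_range_reflect]
  refine sum_congr rfl fun i hi => ?_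
  rw [Nat.add_sub_cancel, Nat.sub_sub_self (Nat.lt_succ_iff.mp (mem_range.mp hi))]
  ring

end BinaryForm

theorem Nat.choose_mul_choose_eq_of_add_eq_succ {k i j : ℕ} (h : i + j = k + 1) :
    (k + j + 1).choose (k + 1) * (k + i).choose k =
      2 * ((k + j).choose (k + 1) * (k + i).choose k) + (k + j).choose k * (k + i).choose (k + 1) := by
  have hj := Nat.choose_succ_right_eq (k + j) k
  have hi := Nat.choose_succ_right_eq (k + i) k
  rw [Nat.add_sub_cancel_left] at hj hi
  rw [Nat.choose_succ_succ']
  apply Nat.eq_of_mul_eq_mul_right k.succ_pos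
  zify at h hi hj ⊢
  linear_combination (-((k + i).choose k : ℤ)) * hj - ((k + j).choose k : ℤ) * hi
    - ((k + j).choose k * (k + i).choose k : ℤ) * h

def polyDABCoeff (d a b i : ℕ) : ℤ := (-1) ^ i * (a + d - i).choose a * (b + i).choose b

theorem polyDABCoeff_eq_zero_of_lt {d i : ℕ} (a b : ℕ) (h : d < i) :
    polyDABCoeff d (a + 1) b i = 0 := by
  rw [polyDABCoeff, Nat.choose_eq_zero_of_lt (by omega : a + 1 + d - i < a + 1)]
  simp

theorem polyDABCoeff_pascal {n i : ℕ} (a b : ℕ) (hi : i ≤ n) :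
    polyDABCoeff n (a + 1) (b + 1) (i + 1) + polyDABCoeff n (a + 1) (b + 1) i =
      polyDABCoeff n (a + 1) b (i + 1) + polyDABCoeff n a (b + 1) i := by
  obtain ⟨e, rfl⟩ := Nat.exists_eq_add_of_le hi
  simp only [polyDABCoeff]
  rw [show a + 1 + (i + e) - (i + 1) = a + e by omega, show a + 1 + (i + e) - i = a + e + 1 by omega,
    show a + (i + e) - i = a + e by omega, show b + 1 + (i + 1) = b + i + 1 + 1 by omega,
    show b + (i + 1) = b + i + 1 by omega, show b + 1 + i = b + i + 1 by omega,
    Nat.choose_succ_succ' (b + i + 1), Nat.choose_succ_succ' (a + e)]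
  push_cast
  ring

theorem polyDABCoeff_diag_zero (n : ℕ) :
    polyDABCoeff (n + 1) (n + 1) (n + 1) 0 = 2 * polyDABCoeff n (n + 1) n 0 := by
  have key := Nat.choose_mul_choose_eq_of_add_eq_succ (k := n) (i := 0) (j := n + 1) (by omega)
  simp only [polyDABCoeff, pow_zero, one_mul, add_zero, Nat.sub_zero, Nat.choose_self, mul_one,
    Nat.choose_succ_self, mul_zero] at key ⊢
  rw [show n + 1 + (n + 1) = n + (n + 1) + 1 by omega, key, show n + 1 + n = n + (n + 1) by omega]
  push_cast
  ring

theorem polyDABCoeff_diag_succ {n t : ℕ} (ht : t ≤ n) :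
    polyDABCoeff (n + 1) (n + 1) (n + 1) (t + 1) + polyDABCoeff n (n + 1) (n + 1) t +
      polyDABCoeff n n (n + 1) t = 2 * polyDABCoeff n (n + 1) n (t + 1) := by
  have key := Nat.choose_mul_choose_eq_of_add_eq_succ (k := n) (i := t + 1) (j := n - t) (by omega)
  simp only [polyDABCoeff]
  rw [show n + 1 + (n + 1) - (t + 1) = n + (n - t) + 1 by omega,
    show n + 1 + n - t = n + (n - t) + 1 by omega, show n + n - t = n + (n - t) by omega,
    show n + 1 + n - (t + 1) = n + (n - t) by omega, show n + 1 + (t + 1) = n + (t + 1) + 1 by omega,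
    show n + 1 + t = n + (t + 1) by omega, Nat.choose_succ_succ' (n + (t + 1)) n]
  push_cast
  zify at key
  linear_combination (-1 : ℤ) ^ (t + 1) * key

section PolyDAB

variable (A Y : MvPolynomial (Fin 3) ℤ)

theorem PolyDAB_eq_binaryForm (d a b : ℕ) :
    PolyDAB d a b A Y = binaryForm d A Y (fun i => C (polyDABCoeff d a b i)) :=
  rfl

theorem PolyDAB_swap (d a b : ℕ) :
    PolyDAB d a b Y A = C ((-1) ^ d) * PolyDAB d b a A Y := by
  rw [PolyDAB_eq_binaryForm, PolyDAB_eq_binaryForm, binaryForm_swap, mul_binaryForm]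
  refine binaryForm_congr fun i hi => ?_
  obtain ⟨e, rfl⟩ := Nat.exists_eq_add_of_le hi
  simp only [polyDABCoeff, ← map_mul, Nat.add_sub_cancel_left]
  congr 1
  have hsq : ((-1 : ℤ) ^ i) * (-1) ^ i = 1 := by rw [← mul_pow]; norm_num
  rw [show a + (i + e) - e = a + i by omega, show b + (i + e) - i = b + e by omega]
  linear_combination (-(-1) ^ e * ((a + i).choose a : ℤ) * (b + e).choose b) * hsq

theorem fst_mul_PolyDAB (n a b : ℕ) :
    A * PolyDAB n (a + 1) b A Y = binaryForm (n + 1) A Y (fun i => C (polyDABCoeff n (a + 1) b i)) :=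
  fst_mul_binaryForm (c := fun i => C (polyDABCoeff n (a + 1) b i))
    (by rw [polyDABCoeff_eq_zero_of_lt a b n.lt_succ_self, map_zero])

theorem add_mul_PolyDAB (n a b : ℕ) :
    (A + Y) * PolyDAB n (a + 1) (b + 1) A Y =
      A * PolyDAB n (a + 1) b A Y + Y * PolyDAB n a (b + 1) A Y := by
  rw [add_mul, fst_mul_PolyDAB, fst_mul_PolyDAB, PolyDAB_eq_binaryForm, PolyDAB_eq_binaryForm,
    snd_mul_binaryForm, snd_mul_binaryForm, binaryForm_add, binaryForm_add]
  refine binaryForm_congr fun i hi => ?_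
  rcases i with _ | i
  · simp [polyDABCoeff]
  · simp only [Nat.succ_ne_zero, if_false, Nat.add_sub_cancel, ← map_add]
    rw [polyDABCoeff_pascal a b (by omega)]

theorem PolyDAB_diag_add_snd_mul_eq_two_fst_mul (n : ℕ) :
    PolyDAB (n + 1) (n + 1) (n + 1) A Y + Y * PolyDAB n (n + 1) (n + 1) A Y +
      Y * PolyDAB n n (n + 1) A Y = 2 * (A * PolyDAB n (n + 1) n A Y) := by
  rw [two_mul, fst_mul_PolyDAB, PolyDAB_eq_binaryForm, PolyDAB_eq_binaryForm, PolyDAB_eq_binaryForm,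
    snd_mul_binaryForm, snd_mul_binaryForm, binaryForm_add, binaryForm_add, binaryForm_add]
  refine binaryForm_congr fun i hi => ?_
  rcases i with _ | t
  · simp only [if_true, add_zero, ← map_add, polyDABCoeff_diag_zero, two_mul]
  · simp only [Nat.succ_ne_zero, if_false, Nat.add_sub_cancel, ← map_add]
    rw [polyDABCoeff_diag_succ (by omega), two_mul]

end PolyDAB

/-- Lemma (l2b): for every positive integer `δ`,
`P_{2δ} + 3A·P_{2δ−1} + (−1)^δ A(A+B+C)·Poly_{δ−1,δ,δ}(A,B)·Poly_{δ−1,δ,δ}(A,C) = 0`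
in `ℤ[A,B,C]`. -/
theorem Peven_add_three_A_Podd (δ : ℕ) (hδ : 1 ≤ δ) :
    Peven δ + 3 * pA * Podd δ +
      MvPolynomial.C ((-1 : ℤ) ^ δ) * pA * (pA + pB + pC) *
        PolyDAB (δ - 1) δ δ pA pB * PolyDAB (δ - 1) δ δ pA pC = 0 := by
  obtain ⟨n, rfl⟩ := Nat.exists_eq_add_of_le' hδ
  have hchoose : (3 * (n + 1)).choose (n + 1) = 3 * (3 * n + 2).choose n := by
    have h := Nat.add_one_mul_choose_eq (3 * n + 2) n
    rw [show 3 * n + 2 + 1 = 3 * (n + 1) by ring] at h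
    exact Nat.eq_of_mul_eq_mul_right (by omega : 0 < n + 1) (by linarith)
  have huB := PolyDAB_diag_add_snd_mul_eq_two_fst_mul pA pB n
  have huC := PolyDAB_diag_add_snd_mul_eq_two_fst_mul pA pC n
  have hvB := add_mul_PolyDAB pA pB n n n
  have hvC := add_mul_PolyDAB pA pC n n n
  simp only [Peven, Podd, frakPeven, frakPodd, Nat.add_sub_cancel,
    show 2 * (n + 1) - 1 = 2 * n + 1 by omega, show 3 * (n + 1) - 1 = 3 * n + 2 by omega]
  rw [PolyDAB_swap pA pB, PolyDAB_swap pA pB, PolyDAB_swap pA pC, PolyDAB_swap pA pC]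
  simp only [map_mul, map_pow, map_neg, map_one, map_natCast, map_ofNat, hchoose, Nat.cast_mul,
    Nat.cast_ofNat]
  linear_combination (-1) ^ n *
    ((PolyDAB (n + 1) (n + 1) (n + 1) pA pC + pC * PolyDAB n (n + 1) (n + 1) pA pC) * huB
      + (2 * pA * PolyDAB n (n + 1) n pA pB - pB * PolyDAB n n (n + 1) pA pB) * huC
      - (pA + pC) * PolyDAB n (n + 1) (n + 1) pA pC * hvB
      - (pA * PolyDAB n (n + 1) n pA pB + pB * PolyDAB n n (n + 1) pA pB) * hvC)

end
end

section
/- Let p be an odd prime and let n be an integer such that either n ≥ 4, or n = 3 and p ≡ 2 mod 3. Suppose q = p^e and q = bn + 1 for some positive integers b and e. If a is a non-negative integer such that qa + b ∈ S_p, then a is even. -/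
private lemma peelE3 (e : ℕ) : ∀ x : ℕ, S3mem x → Even x →
    ∃ (θ : ℕ) (R : ℤ), S3mem θ ∧ Even θ ∧ (x:ℤ) = 3^e * θ + R ∧
      0 ≤ R ∧ R ≤ 2*(3^e - 1) ∧
      ∀ e', e = e' + 1 → (R ≤ 2*(3^e' - 1) ∨ 4*3^e' ≤ R) := by
  induction e with
  | zero =>
    intro x hx hev
    exact ⟨x, 0, hx, hev, by push_cast; ring, le_refl _, by norm_num, fun e' h => by omega⟩
  | succ e ih =>
    intro x hx hev
    obtain ⟨θ', r, hθ', hev', hr, hxeq⟩ :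
        ∃ θ' r, S3mem θ' ∧ Even θ' ∧ (r = 0 ∨ r = 4) ∧ x = 3*θ' + r := by
      cases hx with
      | zero => exact ⟨0, 0, S3mem.zero, Even.zero, Or.inl rfl, by ring⟩
      | mul3 h he' => exact ⟨_, 0, h, he', Or.inl rfl, rfl⟩
      | mul3add1 h he' =>
        exfalso; obtain ⟨k, hk⟩ := he'; obtain ⟨m, hm⟩ := hev; omega
      | mul3add4 h he' => exact ⟨_, 4, h, he', Or.inr rfl, rfl⟩
      | mul3add5 h he' =>
        exfalso; obtain ⟨k, hk⟩ := he'; obtain ⟨m, hm⟩ := hev; omega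
    obtain ⟨θ, R', h1, h2, h3, h4, h5, h6⟩ := ih θ' hθ' hev'
    have hpow : (3:ℤ)^(e+1) = 3 * 3^e := by ring
    refine ⟨θ, 3*R' + r, h1, h2, ?_, ?_, ?_, ?_⟩
    · subst hxeq
      push_cast
      rw [hpow]
      rcases hr with rfl | rfl <;> push_cast <;> linarith [h3]
    · rcases hr with rfl | rfl <;> push_cast <;> linarith
    · rcases hr with rfl | rfl <;> push_cast <;> [skip; skip] <;> rw [hpow] <;> linarith
    · intro e' he'
      rw [show e' = e from by omega]
      rcases Nat.eq_zero_or_pos e with rfl | hpos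
      · have hR0 : R' = 0 := by norm_num at h5 ⊢; omega
        rcases hr with rfl | rfl <;> simp [hR0] <;> norm_num
      · obtain ⟨e2, rfl⟩ : ∃ e2, e = e2 + 1 := ⟨e - 1, by omega⟩
        rcases h6 e2 rfl with h | h
        · left
          have : (3:ℤ)^(e2+1) = 3*3^e2 := by ring
          rcases hr with rfl | rfl <;> push_cast <;> rw [this] <;> linarith
        · right
          have : (3:ℤ)^(e2+1) = 3*3^e2 := by ring
          rcases hr with rfl | rfl <;> push_cast <;> rw [this] <;> linarith

private lemma even3  (n q b e2 : ℕ) (hn : 4 ≤ n) (hb : 0 < b)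
    (hq : q = 3 ^ (e2+2)) (hqb : q = b * n + 1) (a : ℕ)
    (ha : S3mem (q * a + b)) : Even a := by
  rcases Nat.eq_zero_or_pos a with rfl | hapos
  · exact Even.zero
  obtain ⟨θ₁, r0, hθ₁, hevθ₁, hr0, hx⟩ :
      ∃ θ₁ r0, S3mem θ₁ ∧ Even θ₁ ∧ r0 ≤ 5 ∧ q*a + b = 3*θ₁ + r0 := by
    generalize hxe : q*a + b = x at ha
    cases ha with
    | zero => exact absurd (Nat.add_eq_zero.mp hxe).2 (by omega)
    | mul3 h hev => exact ⟨_, 0, h, hev, by omega, by omega⟩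
    | mul3add1 h hev => exact ⟨_, 1, h, hev, by omega, by omega⟩
    | mul3add4 h hev => exact ⟨_, 4, h, hev, by omega, by omega⟩
    | mul3add5 h hev => exact ⟨_, 5, h, hev, by omega, by omega⟩
  obtain ⟨θ, R', hθ, hevθ, hteq, hR0, hR1, hdich⟩ := peelE3 (e2+1) θ₁ hθ₁ hevθ₁
  have hY0 : (0:ℤ) < 3^e2 := by positivity
  have hXY : (3:ℤ)^(e2+1) = 3*3^e2 := by ring
  have hqz : (q:ℤ) = 3*3^(e2+1) := by subst hq; push_cast; ring
  have hqbz : (q:ℤ) = b*n + 1 := by exact_mod_cast hqb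
  have h4b : 4*(b:ℤ) ≤ (q:ℤ) - 1 := by
    have h1 : (b:ℤ)*4 ≤ (b:ℤ)*n := by
      have : (4:ℤ) ≤ (n:ℤ) := by exact_mod_cast hn
      exact mul_le_mul_of_nonneg_left this (Int.natCast_nonneg b)
    linarith
  have hbz : (1:ℤ) ≤ (b:ℤ) := by exact_mod_cast hb
  have hr0z : (r0:ℤ) ≤ 5 := by exact_mod_cast hr0
  have hr0z' : (0:ℤ) ≤ (r0:ℤ) := Int.natCast_nonneg r0
  have hxz : (q:ℤ)*a + b = 3*((3:ℤ)^(e2+1)*θ + R') + r0 := by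
    have h := congrArg (Nat.cast : ℕ → ℤ) hx
    push_cast at h
    rw [hteq] at h
    linarith
  have hkey : 3*(3:ℤ)^(e2+1)*((a:ℤ) - θ) = 3*R' + r0 - b := by
    rw [hqz] at hxz; linear_combination hxz
  have hX1 : (1:ℤ) ≤ 3^(e2+1) := by nlinarith [hY0]
  have hD1 : (a:ℤ) - θ < 2 := by
    by_contra hc
    push_neg at hc
    have := mul_le_mul_of_nonneg_left hc (show (0:ℤ) ≤ 3*3^(e2+1) by positivity)
    linarith [hkey, hR1, hr0z, hbz]
  have hD0 : (-1:ℤ) < (a:ℤ) - θ := by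
    by_contra hc
    push_neg at hc
    have := mul_le_mul_of_nonneg_left hc (show (0:ℤ) ≤ 3*3^(e2+1) by positivity)
    linarith [hkey, hR0, hr0z', h4b, hqz, hbz]
  have hD : (a:ℤ) - θ = 0 ∨ (a:ℤ) - θ = 1 := by omega
  rcases hD with hD | hD
  · have : a = θ := by exact_mod_cast (by linarith : (a:ℤ) = θ)
    rw [this]; exact hevθ
  · exfalso
    rw [hD, mul_one] at hkey
    rcases hdich e2 rfl with hlow | hhigh
    · linarith [hXY, hbz, hr0z, hY0]
    · linarith [hXY, h4b, hqz, hr0z', hY0]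


private def Gsum (p : ℤ) : ℕ → ℤ
  | 0 => 0
  | e+1 => p * Gsum p e + 1

private lemma Gsum_nonneg (p : ℤ) (hp : 0 ≤ p) : ∀ e, 0 ≤ Gsum p e
  | 0 => le_refl 0
  | e+1 => by
      have := Gsum_nonneg p hp e
      simp only [Gsum]
      positivity

private lemma Gsum_mul (p : ℤ) : ∀ e, (p - 1) * Gsum p e = p^e - 1
  | 0 => by simp [Gsum]
  | e+1 => by
      have h := Gsum_mul p e
      simp only [Gsum, pow_succ]
      linear_combination p * h

private lemma peelE (p π : ℕ) (hπ : (π:ℤ) = ((p / 3 : ℕ) : ℤ)) (hp5 : 5 ≤ p)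
    (h3π : 3*π + 1 ≤ p) (hπ1 : 1 ≤ π) :
    ∀ (e : ℕ) (x : ℕ), Spmem p x → Even x → (p:ℤ)^e ≤ (x:ℤ) →
    ∃ (θ : ℕ) (R : ℤ), Spmem p θ ∧ Even θ ∧ (x:ℤ) = (p:ℤ)^e * θ + R ∧
      -(2 * (π:ℤ) * Gsum p e) ≤ R ∧ R ≤ 2 * (π:ℤ) * Gsum p e := by
  intro e
  induction e with
  | zero =>
    intro x hx hev _
    exact ⟨x, 0, hx, hev, by push_cast; ring, by simp [Gsum], by simp [Gsum]⟩
  | succ e ih =>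
    intro x hx hev hge
    have hp0 : (0:ℤ) < p := by exact_mod_cast (by omega : 0 < p)
    have hπ0 : (1:ℤ) ≤ (π:ℤ) := by exact_mod_cast hπ1
    have h3z : 3*(π:ℤ) + 1 ≤ (p:ℤ) := by exact_mod_cast h3π
    have h2π : 2*(π:ℤ) ≤ (p:ℤ) - 1 := by linarith
    have hpe : (p:ℤ) ≤ (p:ℤ)^(e+1) := le_self_pow₀ (by linarith) (by omega)
    cases hx with
    | base h =>
      exfalso
      have hx2 : (x:ℤ) ≤ 2*(π:ℤ) := by rw [hπ]; exact_mod_cast h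
      linarith
    | step hθ' hevθ' h1 h2 =>
      rename_i θ'
      rw [← hπ] at h1 h2
      -- parity of the digit
      have hex : Even ((x:ℤ)) := by exact_mod_cast hev
      have hepθ : Even ((p:ℤ)*(θ':ℤ)) := (Int.even_coe_nat θ' |>.mpr hevθ').mul_left _
      obtain ⟨k, hk⟩ := hex.sub hepθ
      -- hk : (x:ℤ) - p*θ' = k + k
      have hklow : -(π:ℤ) ≤ k := by
        have : -2*(π:ℤ) - 1 ≤ k + k := by linarith [hk, h1]
        omega
      -- θ' is large
      have hps : (p:ℤ)^(e+1) = (p:ℤ)*(p:ℤ)^e := by ring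
      have hstep : (p:ℤ)*((p:ℤ)^e - 1) < (p:ℤ)*(θ':ℤ) := by linarith
      have hθ'ge : (p:ℤ)^e ≤ (θ':ℤ) := by
        have h' := lt_of_mul_lt_mul_left hstep (le_of_lt hp0)
        linarith [Int.add_one_le_iff.mpr h']
      obtain ⟨θ, R', hSθ, hEθ, hEq, hlb, hub⟩ := ih θ' hθ' hevθ' hθ'ge
      refine ⟨θ, (p:ℤ)*R' + ((x:ℤ) - (p:ℤ)*θ'), hSθ, hEθ, by linear_combination (p:ℤ) * hEq, ?_, ?_⟩
      · simp only [Gsum]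
        have hm := mul_le_mul_of_nonneg_left hlb (le_of_lt hp0)
        linarith [hk]
      · simp only [Gsum]
        have hm := mul_le_mul_of_nonneg_left hub (le_of_lt hp0)
        linarith

private lemma even5 (p : ℕ) (hp : p.Prime) (hp5 : 5 ≤ p) (n q b e : ℕ)
    (hn : 4 ≤ n ∨ (n = 3 ∧ p % 3 = 2)) (hb : 0 < b) (he : 0 < e)
    (hq : q = p ^ e) (hqb : q = b * n + 1) (a : ℕ)
    (ha : Spmem p (q * a + b)) : Even a := by
  rcases Nat.eq_zero_or_pos a with rfl | hapos
  · exact Even.zero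
  obtain ⟨e2, rfl⟩ : ∃ e2, e = e2 + 1 := ⟨e - 1, by omega⟩
  -- basic facts about π = p/3
  have hp3 : p % 3 ≠ 0 := by
    intro h
    rcases (Nat.Prime.eq_one_or_self_of_dvd hp 3 (Nat.dvd_of_mod_eq_zero h)) with h' | h' <;> omega
  have h3π : 3*(p/3) + 1 ≤ p := by omega
  have hπ1 : 1 ≤ p/3 := by omega
  have hπ2 : p ≤ 3*(p/3) + 2 := by omega
  have hp0 : (0:ℤ) < p := by exact_mod_cast (by omega : 0 < p)
  have hπ0 : (1:ℤ) ≤ ((p/3 : ℕ):ℤ) := by exact_mod_cast hπ1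
  have h3z : 3*((p/3 : ℕ):ℤ) + 1 ≤ (p:ℤ) := by exact_mod_cast h3π
  have h2π : 2*((p/3 : ℕ):ℤ) ≤ (p:ℤ) - 1 := by linarith
  have hn3 : 3 ≤ n := by rcases hn with h | ⟨h, _⟩ <;> omega
  have hnz : (3:ℤ) ≤ (n:ℤ) := by exact_mod_cast hn3
  have hbz : (1:ℤ) ≤ (b:ℤ) := by exact_mod_cast hb
  have hqz : (q:ℤ) = (p:ℤ)^(e2+1) := by subst hq; push_cast; ring
  have hqbz : (q:ℤ) = (b:ℤ)*n + 1 := by exact_mod_cast hqb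
  -- the key inequality (n-1)(p-1) > 2πn
  have hkey : 2*((p/3 : ℕ):ℤ)*(n:ℤ) < ((n:ℤ)-1)*((p:ℤ)-1) := by
    rcases hn with h4 | ⟨h3, hmod⟩
    · have h4z : (4:ℤ) ≤ (n:ℤ) := by exact_mod_cast h4
      have t1 : ((n:ℤ)-1)*(3*((p/3 : ℕ):ℤ)) ≤ ((n:ℤ)-1)*((p:ℤ)-1) :=
        mul_le_mul_of_nonneg_left (by linarith) (by linarith)
      have t2 : ((p/3 : ℕ):ℤ)*1 ≤ ((p/3 : ℕ):ℤ)*((n:ℤ)-3) :=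
        mul_le_mul_of_nonneg_left (by linarith) (by linarith)
      nlinarith [t1, t2]
    · have hpeq : p = 3*(p/3) + 2 := by omega
      have hpz : (p:ℤ) = 3*((p/3 : ℕ):ℤ) + 2 := by exact_mod_cast hpeq
      subst h3
      push_cast
      linarith
  -- invert one step
  cases ha with
  | base h =>
    exfalso
    have hpq : p ≤ q := by rw [hq]; exact Nat.le_self_pow (by omega) p
    have hqa : q ≤ q*a := Nat.le_mul_of_pos_right q hapos
    have : 2*(p/3) < p := by omega
    linarith
  | step hθ₁ hevθ₁ h1 h2 =>
    rename_i θ₁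
    have hcast : ((q*a+b : ℕ):ℤ) = (q:ℤ)*a + b := by push_cast; ring
    rw [hcast] at h1 h2
    -- θ₁ ≥ p^e2
    have hqa : (q:ℤ) ≤ (q:ℤ)*a :=
      le_mul_of_one_le_right (by linarith) (by exact_mod_cast hapos)
    have hps : (p:ℤ)^(e2+1) = (p:ℤ)*(p:ℤ)^e2 := by ring
    have hstep : (p:ℤ)*((p:ℤ)^e2 - 1) < (p:ℤ)*(θ₁:ℤ) := by linarith
    have hθ₁ge : (p:ℤ)^e2 ≤ (θ₁:ℤ) := by
      have h' := lt_of_mul_lt_mul_left hstep (le_of_lt hp0)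
      linarith [Int.add_one_le_iff.mpr h']
    obtain ⟨θ, R', hSθ, hEθ, hEq, hlb, hub⟩ :=
      peelE p (p/3) rfl hp5 h3π hπ1 e2 θ₁ hθ₁ hevθ₁ hθ₁ge
    -- Gsum facts
    have hGnn : 0 ≤ Gsum (p:ℤ) e2 := Gsum_nonneg _ (by linarith) _
    have hGnn1 : 0 ≤ Gsum (p:ℤ) (e2+1) := Gsum_nonneg _ (by linarith) _
    have hGe : Gsum (p:ℤ) (e2+1) = (p:ℤ) * Gsum (p:ℤ) e2 + 1 := rfl
    have hGmul : ((p:ℤ)-1) * Gsum (p:ℤ) (e2+1) = (b:ℤ)*n := by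
      rw [Gsum_mul]; linarith
    -- 2π * Ge < b(n-1)
    have hkey2 : 2*((p/3 : ℕ):ℤ)*Gsum (p:ℤ) (e2+1) < (b:ℤ)*((n:ℤ)-1) := by
      have w : 2*((p/3 : ℕ):ℤ)*((b:ℤ)*n) < ((p:ℤ)-1)*((b:ℤ)*((n:ℤ)-1)) := by
        have := mul_lt_mul_of_pos_left hkey (by linarith : (0:ℤ) < (b:ℤ))
        linarith [this]
      have t' : ((p:ℤ)-1)*(2*((p/3 : ℕ):ℤ)*Gsum (p:ℤ) (e2+1)) = 2*((p/3 : ℕ):ℤ)*((b:ℤ)*n) :=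
        by linear_combination 2*((p/3 : ℕ):ℤ)*hGmul
      have v : ((p:ℤ)-1)*(2*((p/3 : ℕ):ℤ)*Gsum (p:ℤ) (e2+1)) < ((p:ℤ)-1)*((b:ℤ)*((n:ℤ)-1)) := by
        linarith
      exact lt_of_mul_lt_mul_left v (by linarith)
    -- 2π * Ge ≤ q - 1
    have hub2 : 2*((p/3 : ℕ):ℤ)*Gsum (p:ℤ) (e2+1) ≤ (q:ℤ) - 1 := by
      have := mul_le_mul_of_nonneg_right h2π hGnn1
      linarith [hGmul, hqbz]
    -- the master equation
    have hqX : (q:ℤ) = (p:ℤ) * (p:ℤ)^e2 := by rw [hqz]; ring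
    have hkeyEq : (q:ℤ)*((θ:ℤ) - a) =
        (b:ℤ) - ((p:ℤ)*R' + (((q:ℤ)*a + b) - (p:ℤ)*θ₁)) := by
      linear_combination (-(p:ℤ))*hEq + (θ:ℤ)*hqX
    -- bounds on Rtot
    have hmlb := mul_le_mul_of_nonneg_left hlb (le_of_lt hp0)
    have hmub := mul_le_mul_of_nonneg_left hub (le_of_lt hp0)
    -- conclude θ = a
    have hq0 : (0:ℤ) < q := by rw [hqz]; positivity
    have hd1 : (θ:ℤ) - a < 1 := by
      by_contra hc
      push_neg at hc
      have := mul_le_mul_of_nonneg_left hc (le_of_lt hq0)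
      -- q*1 ≤ q*(θ-a) = b - Rtot, but b - Rtot < q
      rw [hGe] at hkey2
      linarith [hkeyEq, hmlb, h1, hqbz]
    have hd0 : (-1:ℤ) < (θ:ℤ) - a := by
      by_contra hc
      push_neg at hc
      have := mul_le_mul_of_nonneg_left hc (le_of_lt hq0)
      rw [hGe] at hub2
      linarith [hkeyEq, hmub, h2, hbz]
    have : (θ:ℤ) = a := by omega
    have : θ = a := by exact_mod_cast this
    rw [← this]; exact hEθ


/-- Lemma (Oct13): let `p` be an odd prime and `n` an integer with `n ≥ 4`, or `n = 3` and
`p ≡ 2 (mod 3)`.  If `q = pᵉ = bn + 1` with `b, e` positive integers and `a` is a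
non-negative integer with `qa + b ∈ S_p`, then `a` is even. -/
theorem even_of_qa_add_b_mem_S
    (p : ℕ) (hp : p.Prime) (hodd : Odd p)
    (n : ℕ) (hn : 4 ≤ n ∨ (n = 3 ∧ p % 3 = 2))
    (q b e : ℕ) (hb : 0 < b) (he : 0 < e) (hq : q = p ^ e) (hqb : q = b * n + 1)
    (a : ℕ) (ha : q * a + b ∈ Sset p) :
    Even a := by
  have hp21 : p % 2 = 1 := Nat.odd_iff.mp hodd
  have hple : 2 ≤ p := hp.two_le
  have hp0 : p ≠ 0 := by omega
  have hp2' : p ≠ 2 := by omega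
  by_cases hp3 : p = 3
  · subst hp3
    have ha' : S3mem (q * a + b) := by
      simpa [Sset, Set.mem_setOf_eq] using ha
    have hn4 : 4 ≤ n := by
      rcases hn with h | ⟨_, h⟩
      · exact h
      · norm_num at h
    have hq5 : 5 ≤ q := by rw [hqb]; linarith [Nat.mul_le_mul hb hn4]
    obtain ⟨e2, rfl⟩ : ∃ e2, e = e2 + 2 := by
      rcases e with _ | e'
      · omega
      · rcases e' with _ | e2
        · exfalso; rw [pow_one] at hq; omega
        · exact ⟨e2, rfl⟩
    exact even3 n q b e2 hn4 hb hq hqb a ha'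
  · have hp5 : 5 ≤ p := by omega
    have ha' : Spmem p (q * a + b) := by
      simp only [Sset, if_neg hp0, if_neg hp2', if_neg hp3, Set.mem_setOf_eq] at ha
      exact ha
    exact even5 p hp hp5 n q b e hn hb he hq hqb a ha'
end

section
/- Let k be a field, let n be a positive integer, and let N = an + r be a positive integer with integers a ≥ 0 and 0 ≤ r ≤ n−1. Let R = k[x,y]/(x^n+y^n), let D be the 2×2 matrix over R with rows [x^{n−r}, (−1)^{a−1} y^r] and [(−1)^a y^{n−r}, x^r], and let Ď be the 2×2 matrix over R with rows [x^r, (−1)^a y^r] and [(−1)^{a+1} y^{n−r}, x^{n−r}]. Then the infinite sequence ⋯ → R² --Ď--> R² --D--> R² --[x^N, y^N]--> R → R/(x^N,y^N) → 0 is an exact complex of R-modules; explicitly: the kernel of the map R² → R, (u,v) ↦ u·x^N + v·y^N, equals the image of the map R² → R² given by D; the kernel of the map given by D equals the image of the map given by Ď; and the kernel of the map given by Ď equals the image of the map given by D. -/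
open MvPolynomial

universe u

set_option synthInstance.maxHeartbeats 400000
set_option maxHeartbeats 1000000

noncomputable section

/-- The two-variable diagonal hypersurface ring `R̄ = k[x,y]/(xⁿ+yⁿ)`. -/
abbrev DiagRing2 (k : Type u) [Field k] (n : ℕ) : Type u :=
  MvPolynomial (Fin 2) k ⧸
    Ideal.span {(X 0 : MvPolynomial (Fin 2) k) ^ n + X 1 ^ n}

/-- The images of the variables `x`, `y` in `R̄`. -/
def xv2 (k : Type u) [Field k] (n : ℕ) (i : Fin 2) : DiagRing2 k n :=
  Ideal.Quotient.mk _ (X i)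

/-- The matrix `D` with rows `[x^{n−r}, (−1)^{a−1} y^r]`, `[(−1)^a y^{n−r}, x^r]`
(note `(−1)^{a−1} = (−1)^{a+1}`). -/
def Dmat (k : Type u) [Field k] (n a r : ℕ) : Matrix (Fin 2) (Fin 2) (DiagRing2 k n) :=
  !![xv2 k n 0 ^ (n - r),                  (-1 : DiagRing2 k n) ^ (a + 1) * xv2 k n 1 ^ r;
     (-1 : DiagRing2 k n) ^ a * xv2 k n 1 ^ (n - r), xv2 k n 0 ^ r]

/-- The matrix `Ď` with rows `[x^r, (−1)^a y^r]`, `[(−1)^{a+1} y^{n−r}, x^{n−r}]`. -/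
def Dcheck (k : Type u) [Field k] (n a r : ℕ) : Matrix (Fin 2) (Fin 2) (DiagRing2 k n) :=
  !![xv2 k n 0 ^ r,                      (-1 : DiagRing2 k n) ^ a * xv2 k n 1 ^ r;
     (-1 : DiagRing2 k n) ^ (a + 1) * xv2 k n 1 ^ (n - r), xv2 k n 0 ^ (n - r)]

/-- The `R̄`-linear map `R̄² → R̄`, `(u,v) ↦ u·x^N + v·y^N`. -/
def rowMap2 (k : Type u) [Field k] (n N : ℕ) :
    (Fin 2 → DiagRing2 k n) →ₗ[DiagRing2 k n] DiagRing2 k n :=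
  ∑ i : Fin 2,
    (LinearMap.toSpanSingleton (DiagRing2 k n) (DiagRing2 k n) (xv2 k n i ^ N)).comp
      (LinearMap.proj i)

/-!
Over `S = k[x,y]` the lifts of `D` and `Ď` form a matrix factorisation of `f = xⁿ + yⁿ`:
`D Ď = Ď D = f • 1`. As `f` is a nonzerodivisor, this forces `ker D = im Ď` and `ker Ď = im D`
over `R = S/(f)`. For the row map, `xⁿ = -yⁿ` in `R` gives `x^N = (-1)^a y^{an} x^r`, so
`u x^N + v y^N` is a unit multiple of `y^{an}` times the first entry of `Ď (u,v)`. Since `y` is a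
nonzerodivisor on `R` (it is prime in `S` and does not divide `f`) and `D Ď = 0` over `R`, the
vanishing of that entry already forces `Ď (u,v) = 0`; hence the kernel of the row map is
`ker Ď = im D`.
-/

open scoped nonZeroDivisors

namespace Matrix

variable {S ι : Type*} [CommRing S] [Fintype ι] [DecidableEq ι]

theorem ker_mulVecLin_map_mk_eq_range {f : S} (hf : f ∈ S⁰) {A B : Matrix ι ι S}
    (hBA : B * A = f • 1) (hAB : A * B = f • 1) :
    LinearMap.ker (A.map (Ideal.Quotient.mk (Ideal.span {f}))).mulVecLin =
      LinearMap.range (B.map (Ideal.Quotient.mk (Ideal.span {f}))).mulVecLin := by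
  set π := Ideal.Quotient.mk (Ideal.span {f})
  apply le_antisymm
  · intro v hv
    obtain ⟨u, rfl⟩ := Ideal.Quotient.mk_surjective.comp_left v
    have hAu : ∀ i, f ∣ (A *ᵥ u) i := fun i => by
      rw [← Ideal.Quotient.eq_zero_iff_dvd, RingHom.map_mulVec]
      exact congrFun hv i
    choose c hc using hAu
    have hfu : f • u = f • (B *ᵥ c) :=
      calc f • u = (B * A) *ᵥ u := by rw [hBA, smul_mulVec, one_mulVec]
        _ = B *ᵥ (f • c) := by rw [← mulVec_mulVec]; exact congrArg _ (funext hc)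
        _ = f • (B *ᵥ c) := mulVec_smul ..
    refine ⟨π ∘ c, funext fun i => ?_⟩
    rw [mulVecLin_apply, ← RingHom.map_mulVec,
      ← (mul_cancel_left_mem_nonZeroDivisors hf).mp (congrFun hfu i)]
    rfl
  · rintro _ ⟨w, rfl⟩
    have hAB0 : (f • 1 : Matrix ι ι S).map π = 0 := by
      ext i j
      by_cases hij : i = j <;> simp [hij, π]
    rw [LinearMap.mem_ker, ← LinearMap.comp_apply, ← mulVecLin_mul, ← Matrix.map_mul, hAB, hAB0,
      mulVecLin_zero, LinearMap.zero_apply]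

end Matrix

section MatrixFactorization

open Matrix

variable {R S : Type*} [CommRing R] [CommRing S]

/-- `D` and `Ď` over any commutative ring, with `m` standing for `n - r` so that no truncated
subtraction occurs. -/
def dmatOf (x y : R) (a m r : ℕ) : Matrix (Fin 2) (Fin 2) R :=
  !![x ^ m, (-1) ^ (a + 1) * y ^ r;
     (-1) ^ a * y ^ m, x ^ r]

def dcheckOf (x y : R) (a m r : ℕ) : Matrix (Fin 2) (Fin 2) R :=
  !![x ^ r, (-1) ^ a * y ^ r;
     (-1) ^ (a + 1) * y ^ m, x ^ m]

theorem dmatOf_map (φ : R →+* S) (x y : R) (a m r : ℕ) :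
    (dmatOf x y a m r).map φ = dmatOf (φ x) (φ y) a m r := by
  ext i j
  fin_cases i <;> fin_cases j <;> simp [dmatOf]

theorem dcheckOf_map (φ : R →+* S) (x y : R) (a m r : ℕ) :
    (dcheckOf x y a m r).map φ = dcheckOf (φ x) (φ y) a m r := by
  ext i j
  fin_cases i <;> fin_cases j <;> simp [dcheckOf]

theorem dmatOf_mul_dcheckOf (x y : R) (a m r : ℕ) :
    dmatOf x y a m r * dcheckOf x y a m r = (x ^ (m + r) + y ^ (m + r)) • 1 := by
  ext i j
  fin_cases i <;> fin_cases j <;> rcases Nat.even_or_odd a with ha | ha <;>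
    simp [dmatOf, dcheckOf, mul_apply, ha.neg_one_pow, ha.add_one.neg_one_pow] <;> ring

theorem dcheckOf_mul_dmatOf (x y : R) (a m r : ℕ) :
    dcheckOf x y a m r * dmatOf x y a m r = (x ^ (m + r) + y ^ (m + r)) • 1 := by
  ext i j
  fin_cases i <;> fin_cases j <;> rcases Nat.even_or_odd a with ha | ha <;>
    simp [dmatOf, dcheckOf, mul_apply, ha.neg_one_pow, ha.add_one.neg_one_pow] <;> ring

theorem dcheckOf_mulVec_eq_zero_iff {x y : R} {a m r : ℕ} (hy : y ∈ R⁰)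
    (hxy : x ^ (m + r) + y ^ (m + r) = 0) (v : Fin 2 → R) :
    dcheckOf x y a m r *ᵥ v = 0 ↔
      v 0 * x ^ (a * (m + r) + r) + v 1 * y ^ (a * (m + r) + r) = 0 := by
  have hsign : (-1 : R) ^ a * (-1) ^ a = 1 := by rw [← mul_pow]; simp
  have hxa : x ^ (a * (m + r)) = (-1) ^ a * y ^ (a * (m + r)) := by
    rw [mul_comm a, pow_mul, pow_mul, eq_neg_of_add_eq_zero_left hxy, neg_pow]
  set w := dcheckOf x y a m r *ᵥ v
  have hrow : v 0 * x ^ (a * (m + r) + r) + v 1 * y ^ (a * (m + r) + r) =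
      (-1) ^ a * y ^ (a * (m + r)) * w 0 := by
    simp only [w, dcheckOf, mulVec_fin_two, of_apply, cons_val', cons_val_zero, cons_val_one,
      cons_val_fin_one]
    linear_combination (x ^ r * v 0) * hxa - (y ^ (a * (m + r)) * y ^ r * v 1) * hsign
  have hDw : dmatOf x y a m r *ᵥ w = 0 := by
    rw [mulVec_mulVec, dmatOf_mul_dcheckOf, hxy, zero_smul, zero_mulVec]
  have hunit : ∀ i j, (-1 : R) ^ i * y ^ j ∈ R⁰ := fun i j =>
    mul_mem (isUnit_neg_one.pow i).mem_nonZeroDivisors (pow_mem hy j)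
  rw [hrow, mul_left_mem_nonZeroDivisors_eq_zero_iff (hunit _ _)]
  refine ⟨fun hw => congrFun hw 0, fun hw0 => ?_⟩
  have hw1 : w 1 = 0 := by
    have h0 := congrFun hDw 0
    simp only [dmatOf, mulVec_fin_two, of_apply, cons_val', cons_val_zero, cons_val_one,
      cons_val_fin_one, hw0, mul_zero, zero_add, Pi.zero_apply] at h0
    exact (mul_left_mem_nonZeroDivisors_eq_zero_iff (hunit _ _)).mp h0
  ext i
  fin_cases i <;> assumption

end MatrixFactorization

section DiagRing2

variable {k : Type u} [Field k] {n : ℕ}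

theorem xv2_pow_add_xv2_pow : xv2 k n 0 ^ n + xv2 k n 1 ^ n = 0 := by
  simp only [xv2, ← map_pow, ← map_add]
  exact Ideal.Quotient.mk_singleton_self _

theorem X_one_not_dvd_X_pow_add_X_pow (hn : 0 < n) :
    ¬ (X 1 : MvPolynomial (Fin 2) k) ∣ X 0 ^ n + X 1 ^ n := by
  rintro ⟨q, hq⟩
  simpa [zero_pow hn.ne'] using congrArg (eval ![1, 0]) hq

theorem X_pow_add_X_pow_mem_nonZeroDivisors (hn : 0 < n) :
    (X 0 ^ n + X 1 ^ n : MvPolynomial (Fin 2) k) ∈ (MvPolynomial (Fin 2) k)⁰ :=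
  mem_nonZeroDivisors_of_ne_zero fun h => X_one_not_dvd_X_pow_add_X_pow hn (h ▸ dvd_zero _)

theorem xv2_one_mem_nonZeroDivisors (hn : 0 < n) : xv2 k n 1 ∈ (DiagRing2 k n)⁰ := by
  have hrel : IsRelPrime (X 0 ^ n + X 1 ^ n) (X 1 : MvPolynomial (Fin 2) k) :=
    (X_prime.irreducible.isRelPrime_iff_not_dvd.mpr (X_one_not_dvd_X_pow_add_X_pow hn)).symm
  refine mem_nonZeroDivisors_iff_right.mpr fun z hz => ?_
  obtain ⟨t, rfl⟩ := Ideal.Quotient.mk_surjective z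
  rw [xv2, ← map_mul, Ideal.Quotient.eq_zero_iff_dvd] at hz
  exact (Ideal.Quotient.eq_zero_iff_dvd _ _).mpr (hrel.dvd_of_dvd_mul_right hz)

theorem Dmat_eq_dmatOf (a m r : ℕ) :
    Dmat k (m + r) a r = dmatOf (xv2 k (m + r) 0) (xv2 k (m + r) 1) a m r := by
  simp [Dmat, dmatOf]

theorem Dcheck_eq_dcheckOf (a m r : ℕ) :
    Dcheck k (m + r) a r = dcheckOf (xv2 k (m + r) 0) (xv2 k (m + r) 1) a m r := by
  simp [Dcheck, dcheckOf]

theorem Dmat_eq_map (a m r : ℕ) :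
    Dmat k (m + r) a r = (dmatOf (X 0) (X 1) a m r).map (Ideal.Quotient.mk _) := by
  rw [dmatOf_map]
  exact Dmat_eq_dmatOf a m r

theorem Dcheck_eq_map (a m r : ℕ) :
    Dcheck k (m + r) a r = (dcheckOf (X 0) (X 1) a m r).map (Ideal.Quotient.mk _) := by
  rw [dcheckOf_map]
  exact Dcheck_eq_dcheckOf a m r

theorem ker_Dmat_eq_range_Dcheck (hn : 0 < n) {r : ℕ} (hr : r ≤ n) (a : ℕ) :
    LinearMap.ker (Dmat k n a r).mulVecLin = LinearMap.range (Dcheck k n a r).mulVecLin := by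
  obtain ⟨m, rfl⟩ := Nat.exists_eq_add_of_le' hr
  rw [Dmat_eq_map, Dcheck_eq_map]
  exact Matrix.ker_mulVecLin_map_mk_eq_range (X_pow_add_X_pow_mem_nonZeroDivisors hn)
    (dcheckOf_mul_dmatOf _ _ a m r) (dmatOf_mul_dcheckOf _ _ a m r)

theorem ker_Dcheck_eq_range_Dmat (hn : 0 < n) {r : ℕ} (hr : r ≤ n) (a : ℕ) :
    LinearMap.ker (Dcheck k n a r).mulVecLin = LinearMap.range (Dmat k n a r).mulVecLin := by
  obtain ⟨m, rfl⟩ := Nat.exists_eq_add_of_le' hr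
  rw [Dmat_eq_map, Dcheck_eq_map]
  exact Matrix.ker_mulVecLin_map_mk_eq_range (X_pow_add_X_pow_mem_nonZeroDivisors hn)
    (dmatOf_mul_dcheckOf _ _ a m r) (dcheckOf_mul_dmatOf _ _ a m r)

theorem rowMap2_apply (N : ℕ) (v : Fin 2 → DiagRing2 k n) :
    rowMap2 k n N v = v 0 * xv2 k n 0 ^ N + v 1 * xv2 k n 1 ^ N := by
  simp [rowMap2, Fin.sum_univ_two]

theorem range_rowMap2 (N : ℕ) :
    LinearMap.range (rowMap2 k n N) = (Ideal.span {xv2 k n 0 ^ N, xv2 k n 1 ^ N} : Ideal _) := by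
  ext z
  simp only [LinearMap.mem_range, rowMap2_apply, Ideal.mem_span_pair]
  exact ⟨fun ⟨v, hv⟩ => ⟨v 0, v 1, hv⟩, fun ⟨p, q, hpq⟩ => ⟨![p, q], hpq⟩⟩

theorem ker_rowMap2 (hn : 0 < n) {r : ℕ} (hr : r ≤ n) (a : ℕ) :
    LinearMap.ker (rowMap2 k n (a * n + r)) = LinearMap.ker (Dcheck k n a r).mulVecLin := by
  obtain ⟨m, rfl⟩ := Nat.exists_eq_add_of_le' hr
  ext v
  rw [LinearMap.mem_ker, LinearMap.mem_ker, rowMap2_apply, Dcheck_eq_dcheckOf,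
    Matrix.mulVecLin_apply, dcheckOf_mulVec_eq_zero_iff (xv2_one_mem_nonZeroDivisors hn)
      xv2_pow_add_xv2_pow]

end DiagRing2

theorem two_variable_resolution_exact_general
    (k : Type u) [Field k] (n N a r : ℕ) (hn : 0 < n)
    (hr : r ≤ n - 1) (hNr : N = a * n + r) :
    LinearMap.range (rowMap2 k n N) =
        (Ideal.span {xv2 k n 0 ^ N, xv2 k n 1 ^ N} : Ideal (DiagRing2 k n)) ∧
    LinearMap.ker (rowMap2 k n N) = LinearMap.range (Matrix.mulVecLin (Dmat k n a r)) ∧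
    LinearMap.ker (Matrix.mulVecLin (Dmat k n a r)) =
        LinearMap.range (Matrix.mulVecLin (Dcheck k n a r)) ∧
    LinearMap.ker (Matrix.mulVecLin (Dcheck k n a r)) =
        LinearMap.range (Matrix.mulVecLin (Dmat k n a r)) := by
  have hrn : r ≤ n := hr.trans (Nat.sub_le n 1)
  subst hNr
  exact ⟨range_rowMap2 _, (ker_rowMap2 hn hrn a).trans (ker_Dcheck_eq_range_Dmat hn hrn a),
    ker_Dmat_eq_range_Dcheck hn hrn a, ker_Dcheck_eq_range_Dmat hn hrn a⟩

/-- Corollary (C2.4): the sequence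
`⋯ → R̄² --Ď--> R̄² --D--> R̄² --[x^N,y^N]--> R̄ → R̄/(x^N,y^N) → 0` is exact:
the image of the row map is the ideal `(x^N,y^N)` (the kernel of the projection onto
`R̄/(x^N,y^N)`), the kernel of the row map is the image of `D`, the kernel of `D` is the
image of `Ď`, and the kernel of `Ď` is the image of `D`. -/
theorem two_variable_resolution_exact
    (k : Type u) [Field k] (n N a r : ℕ) (hn : 0 < n) (hN : 0 < N)
    (hr : r ≤ n - 1) (hNr : N = a * n + r) :
    LinearMap.range (rowMap2 k n N) =
        (Ideal.span {xv2 k n 0 ^ N, xv2 k n 1 ^ N} : Ideal (DiagRing2 k n)) ∧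
    LinearMap.ker (rowMap2 k n N) = LinearMap.range (Matrix.mulVecLin (Dmat k n a r)) ∧
    LinearMap.ker (Matrix.mulVecLin (Dmat k n a r)) =
        LinearMap.range (Matrix.mulVecLin (Dcheck k n a r)) ∧
    LinearMap.ker (Matrix.mulVecLin (Dcheck k n a r)) =
        LinearMap.range (Matrix.mulVecLin (Dmat k n a r)) :=
  two_variable_resolution_exact_general k n N a r hn hr hNr

end
end
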